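/- arXiv:2406.00880 — 4 statements merged into one kernel-verified Lean document; each statement's English description precedes it below -/
import Mathlib

section
/- Let (F,σ) be a lift of the residue difference field in a model (K,Γ_K,k_K,σ) of ωVFA, i.e. a trivially valued difference subfield of K mapped isomorphically onto k_K by the residue map. Then (F,σ) is transformally algebraically closed in K: every a ∈ K that is transformally algebraic over F belongs to F. -/
/- Statement 4: Let (F,σ) be a lift of the residue difference field in a model
(K,Γ_K,k_K,σ) of ωVFA (i.e. a trivially valued difference subfield of K mapped
isomorphically onto the residue field by the residue map). Then (F,σ) is
transformally algebraically closed in K: every a ∈ K that is transformally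
algebraic over F belongs to F. -/

open MvPolynomial

universe u

/-- The difference polynomial ring `K[x₁,…,xₙ]_σ`: the polynomial ring in the
variables `xᵢ^{σ^k}`, encoded as `MvPolynomial` in variables `(i, k)`. -/
abbrev DiffPoly (n : ℕ) (K : Type u) [CommRing K] : Type u := MvPolynomial (Fin n × ℕ) K

/-- Evaluation of a difference polynomial at a tuple, interpreting the variable
`(i, k)` as `σ^k (a i)`. -/
noncomputable def diffEval {K : Type u} [CommRing K] (σ : K →+* K) {n : ℕ}
    (a : Fin n → K) (P : DiffPoly n K) : K :=
  MvPolynomial.eval (fun p => (⇑σ)^[p.2] (a p.1)) P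

/-- All coefficients of a difference polynomial lie in a given set. -/
def coeffsIn {K : Type u} [CommRing K] {n : ℕ} (S : Set K) (P : DiffPoly n K) : Prop :=
  ∀ m, MvPolynomial.coeff m P ∈ S

/-- A tuple is transformally independent over `F`: it satisfies no nontrivial
difference polynomial relation with coefficients in `F`. -/
def TrfIndep {K : Type u} [Field K] (σ : K →+* K) (F : Set K) {n : ℕ} (a : Fin n → K) : Prop :=
  ∀ P : DiffPoly n K, coeffsIn F P → diffEval σ a P = 0 → P = 0

/-- An element is transformally algebraic over `F` if it satisfies some nontrivial
difference polynomial over `F`. -/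
def TrfAlgebraic {K : Type u} [Field K] (σ : K →+* K) (F : Set K) (a : K) : Prop :=
  ¬ TrfIndep σ F (fun _ : Fin 1 => a)

/-- A contractive valued difference field (i.e. a model of ωVFA): a valued field
`(K, v)` with value group (with zero) `Γ₀`, together with an automorphism `σ`
preserving the valuation ring, inducing an ω-increasing automorphism `σΓ` of the
value group. -/
structure CVDF (K : Type u) (Γ₀ : Type u) [Field K] [LinearOrderedCommGroupWithZero Γ₀] :
    Type u where
  v : Valuation K Γ₀
  σ : K →+* K
  σ_surj : Function.Surjective σ
  σΓ : Γ₀ → Γ₀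
  σΓ_strictMono : StrictMono σΓ
  σΓ_surj : Function.Surjective σΓ
  σΓ_mul : ∀ a b, σΓ (a * b) = σΓ a * σΓ b
  σΓ_zero : σΓ 0 = 0
  v_comm : ∀ x, v (σ x) = σΓ (v x)
  omega_inc : ∀ γ : Γ₀, 1 < γ → ∀ m : ℕ, γ ^ m < σΓ γ




open Finset

section GroupAux
variable {G : Type*} [CommGroup G] [LinearOrder G] [IsOrderedMonoid G]

lemma aux_prod_lt (g : ℕ → G) (h1 : ∀ k, 1 < g k) (hω : ∀ k m, g k ^ m < g (k + 1)) :
    ∀ (n : ℕ) (m : ℕ → ℕ), (∏ k ∈ Finset.range n, g k ^ m k) < g n := by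
  intro n
  induction n with
  | zero => intro m; simpa using h1 0
  | succ n ih =>
    intro m
    rw [Finset.prod_range_succ]
    calc (∏ k ∈ Finset.range n, g k ^ m k) * g n ^ m n
        < g n * g n ^ m n := mul_lt_mul_left (ih m) _
      _ = g n ^ (m n + 1) := (pow_succ' _ _).symm
      _ < g (n + 1) := hω n (m n + 1)

lemma aux_lt_of_lt (g : ℕ → G) (h1 : ∀ k, 1 < g k) (hω : ∀ k m, g k ^ m < g (k + 1))
    (n : ℕ) (a b : ℕ → ℕ) (hab : a n < b n) :
    (∏ k ∈ Finset.range n, g k ^ a k) * g n ^ a n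
      < (∏ k ∈ Finset.range n, g k ^ b k) * g n ^ b n := by
  calc (∏ k ∈ Finset.range n, g k ^ a k) * g n ^ a n
      < g n * g n ^ a n := mul_lt_mul_left (aux_prod_lt g h1 hω n a) _
    _ = g n ^ (a n + 1) := (pow_succ' _ _).symm
    _ ≤ g n ^ b n := pow_le_pow_right' (h1 n).le hab
    _ ≤ (∏ k ∈ Finset.range n, g k ^ b k) * g n ^ b n :=
        le_mul_of_one_le_left' (Finset.one_le_prod' fun i _ => Left.one_le_pow_of_le (h1 i).le _)

lemma aux_eq (g : ℕ → G) (h1 : ∀ k, 1 < g k) (hω : ∀ k m, g k ^ m < g (k + 1)) :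
    ∀ (n : ℕ) (m m' : ℕ → ℕ),
      (∏ k ∈ Finset.range n, g k ^ m k) = (∏ k ∈ Finset.range n, g k ^ m' k) →
      ∀ k < n, m k = m' k := by
  intro n
  induction n with
  | zero => exact fun m m' _ k hk => absurd hk (Nat.not_lt_zero k)
  | succ n ih =>
    intro m m' h k hk
    rw [Finset.prod_range_succ, Finset.prod_range_succ] at h
    have key : m n = m' n := by
      rcases lt_trichotomy (m n) (m' n) with hlt | heq | hgt
      · exact absurd h (ne_of_lt (aux_lt_of_lt g h1 hω n m m' hlt))
      · exact heq
      · exact absurd h.symm (ne_of_lt (aux_lt_of_lt g h1 hω n m' m hgt))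
    rw [key] at h
    have h' := mul_right_cancel h
    rcases Nat.lt_succ_iff_lt_or_eq.mp hk with hk' | hk'
    · exact ih m m' h' k hk'
    · rw [hk']; exact key

lemma aux_inj (g : ℕ → G) (h1 : ∀ k, 1 < g k) (hω : ∀ k m, g k ^ m < g (k + 1)) :
    Function.Injective (fun m : ℕ →₀ ℕ => m.prod fun k e => g k ^ e) := by
  intro m m' h
  simp only at h
  obtain ⟨n, hn⟩ : ∃ n : ℕ, ∀ k ∈ m.support ∪ m'.support, k < n := by
    refine ⟨((m.support ∪ m'.support).sup id) + 1, fun k hk => ?_⟩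
    exact Nat.lt_succ_of_le (Finset.le_sup (f := id) hk)
  have hsub : m.support ⊆ Finset.range n :=
    fun k hk => Finset.mem_range.mpr (hn k (Finset.mem_union_left _ hk))
  have hsub' : m'.support ⊆ Finset.range n :=
    fun k hk => Finset.mem_range.mpr (hn k (Finset.mem_union_right _ hk))
  rw [Finsupp.prod_of_support_subset m hsub _ (fun i _ => pow_zero (g i)),
    Finsupp.prod_of_support_subset m' hsub' _ (fun i _ => pow_zero (g i))] at h
  ext k
  by_cases hk : k < n
  · exact aux_eq g h1 hω n m m' h k hk
  · have h1' : m k = 0 := Finsupp.notMem_support_iff.mp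
      (fun hc => hk (Finset.mem_range.mp (hsub hc)))
    have h2' : m' k = 0 := Finsupp.notMem_support_iff.mp
      (fun hc => hk (Finset.mem_range.mp (hsub' hc)))
    rw [h1', h2']

end GroupAux
section CVDFAux
variable {K Γ₀ : Type u} [Field K] [LinearOrderedCommGroupWithZero Γ₀] (M : CVDF K Γ₀)

lemma CVDF.σΓ_ne_zero {x : Γ₀} (hx : x ≠ 0) : M.σΓ x ≠ 0 := fun h =>
  hx (M.σΓ_strictMono.injective (h.trans M.σΓ_zero.symm))

lemma CVDF.σΓ_one : M.σΓ 1 = 1 := by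
  have h : M.σΓ 1 * M.σΓ 1 = M.σΓ 1 * 1 := by rw [← M.σΓ_mul, one_mul, mul_one]
  exact mul_left_cancel₀ (M.σΓ_ne_zero one_ne_zero) h

lemma CVDF.σΓ_inv {x : Γ₀} (hx : x ≠ 0) : M.σΓ x⁻¹ = (M.σΓ x)⁻¹ := by
  have h : M.σΓ x * M.σΓ x⁻¹ = 1 := by
    rw [← M.σΓ_mul, mul_inv_cancel₀ hx, M.σΓ_one]
  exact inv_eq_of_mul_eq_one_right h |>.symm

lemma CVDF.σΓ_iter_ne_zero {x : Γ₀} (hx : x ≠ 0) (k : ℕ) : (M.σΓ)^[k] x ≠ 0 := by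
  induction k with
  | zero => exact hx
  | succ k ih => rw [Function.iterate_succ_apply']; exact M.σΓ_ne_zero ih

lemma CVDF.v_iter (x : K) (k : ℕ) : M.v ((⇑M.σ)^[k] x) = (M.σΓ)^[k] (M.v x) := by
  induction k with
  | zero => rfl
  | succ k ih => rw [Function.iterate_succ_apply', Function.iterate_succ_apply', M.v_comm, ih]

/-- Iterates of `σΓ` on a unit, as units. -/
noncomputable def CVDF.gunit (u : Γ₀ˣ) (k : ℕ) : Γ₀ˣ :=
  Units.mk0 ((M.σΓ)^[k] (u : Γ₀)) (M.σΓ_iter_ne_zero u.ne_zero k)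

@[simp] lemma CVDF.gunit_val (u : Γ₀ˣ) (k : ℕ) :
    (M.gunit u k : Γ₀) = (M.σΓ)^[k] (u : Γ₀) := rfl

lemma CVDF.σΓ_iter_one_lt {γ : Γ₀} (hγ : 1 < γ) (k : ℕ) : 1 < (M.σΓ)^[k] γ := by
  induction k with
  | zero => exact hγ
  | succ k ih =>
    rw [Function.iterate_succ_apply', ← M.σΓ_one]
    exact M.σΓ_strictMono ih

lemma CVDF.gunit_one_lt {u : Γ₀ˣ} (hu : 1 < u) (k : ℕ) : 1 < M.gunit u k := by
  rw [← Units.val_lt_val, Units.val_one, CVDF.gunit_val]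
  exact M.σΓ_iter_one_lt (by exact_mod_cast hu) k

lemma CVDF.gunit_pow_lt {u : Γ₀ˣ} (hu : 1 < u) (k m : ℕ) :
    M.gunit u k ^ m < M.gunit u (k + 1) := by
  rw [← Units.val_lt_val, Units.val_pow_eq_pow_val, CVDF.gunit_val, CVDF.gunit_val,
    Function.iterate_succ_apply']
  exact M.omega_inc _ (M.σΓ_iter_one_lt (by exact_mod_cast hu) k) m

lemma CVDF.σΓ_iter_inv {γ : Γ₀} (hγ : γ ≠ 0) (k : ℕ) :
    (M.σΓ)^[k] γ⁻¹ = ((M.σΓ)^[k] γ)⁻¹ := by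
  induction k with
  | zero => rfl
  | succ k ih =>
    rw [Function.iterate_succ_apply', Function.iterate_succ_apply', ih,
      M.σΓ_inv (M.σΓ_iter_ne_zero hγ k)]

lemma CVDF.gunit_inv (u : Γ₀ˣ) (k : ℕ) : M.gunit u⁻¹ k = (M.gunit u k)⁻¹ := by
  ext
  simp only [CVDF.gunit_val, Units.val_inv_eq_inv_val]
  exact M.σΓ_iter_inv u.ne_zero k

end CVDFAux
section Core
open Finset
variable {K Γ₀ : Type u} [Field K] [LinearOrderedCommGroupWithZero Γ₀] (M : CVDF K Γ₀)

lemma CVDF.weight_inj {u : Γ₀ˣ} (hu : u ≠ 1) :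
    Function.Injective (fun m : Fin 1 × ℕ →₀ ℕ => m.prod fun p e => M.gunit u p.2 ^ e) := by
  have hsnd : Function.Injective (Prod.snd : Fin 1 × ℕ → ℕ) := fun a b h =>
    Prod.ext (Subsingleton.elim _ _) h
  have base : Function.Injective (fun m : ℕ →₀ ℕ => m.prod fun k e => M.gunit u k ^ e) := by
    rcases hu.lt_or_gt with h | h
    · have h' : 1 < u⁻¹ := one_lt_inv_of_inv (by simpa using h)
      have inj := aux_inj (M.gunit u⁻¹) (M.gunit_one_lt h') (M.gunit_pow_lt h')
      intro m m' hmm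
      apply inj
      simp only [CVDF.gunit_inv, inv_pow, Finsupp.prod]
      rw [Finset.prod_inv_distrib, Finset.prod_inv_distrib]
      simp only [Finsupp.prod] at hmm
      rw [hmm]
    · exact aux_inj (M.gunit u) (M.gunit_one_lt h) (M.gunit_pow_lt h)
  intro m m' hmm
  apply Finsupp.mapDomain_injective hsnd
  apply base
  simp only
  rw [Finsupp.prod_mapDomain_index_inj hsnd, Finsupp.prod_mapDomain_index_inj hsnd]
  exact hmm

lemma trfIndep_of_v_ne_one (F : Subfield K)
    (htriv : ∀ x ∈ F, x ≠ 0 → M.v x = 1)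
    (a : K) (ha : a ≠ 0) (hva : M.v a ≠ 1) :
    TrfIndep M.σ (F : Set K) (fun _ : Fin 1 => a) := by
  intro P hP hev
  by_contra hP0
  have hva0 : M.v a ≠ 0 := fun h => ha (M.v.zero_iff.mp h)
  set u : Γ₀ˣ := Units.mk0 (M.v a) hva0 with hu_def
  have hu : u ≠ 1 := fun h => hva (by rw [← Units.val_mk0 hva0, ← hu_def, h, Units.val_one])
  set W : (Fin 1 × ℕ →₀ ℕ) → Γ₀ˣ := fun m => m.prod fun p e => M.gunit u p.2 ^ e with hW_def
  have hWinj := M.weight_inj hu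
  set f : Fin 1 × ℕ → K := fun p => (⇑M.σ)^[p.2] a with hf_def
  have hvf : ∀ p : Fin 1 × ℕ, M.v (f p) = (M.gunit u p.2 : Γ₀) := by
    intro p; rw [hf_def]; simp only; rw [M.v_iter, CVDF.gunit_val, Units.val_mk0]
  set t : (Fin 1 × ℕ →₀ ℕ) → K := fun m => MvPolynomial.coeff m P * ∏ p ∈ m.support, f p ^ m p
    with ht_def
  have hterm : ∀ m ∈ P.support, M.v (t m) = (W m : Γ₀) := by
    intro m hm
    have hc : MvPolynomial.coeff m P ≠ 0 := MvPolynomial.mem_support_iff.mp hm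
    rw [ht_def]
    simp only
    rw [M.v.map_mul, htriv _ (hP m) hc, one_mul, hW_def]
    simp only [Finsupp.prod]
    rw [map_prod M.v _ m.support, ← Units.coeHom_apply, map_prod (Units.coeHom Γ₀) _ m.support]
    exact Finset.prod_congr rfl fun p _ => by
      rw [Units.coeHom_apply, Units.val_pow_eq_pow_val, map_pow, hvf p]
  have hsupp : P.support.Nonempty := by
    rw [Finset.nonempty_iff_ne_empty]
    exact fun h => hP0 (MvPolynomial.support_eq_empty.mp h)
  obtain ⟨m₀, hm₀, hmax⟩ := P.support.exists_max_image W hsupp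
  have heval : diffEval M.σ (fun _ : Fin 1 => a) P = ∑ m ∈ P.support, t m := by
    rw [diffEval, MvPolynomial.eval_eq]
  rw [heval, ← Finset.add_sum_erase _ _ hm₀] at hev
  have hrest : M.v (∑ m ∈ P.support.erase m₀, t m) < (W m₀ : Γ₀) := by
    apply Valuation.map_sum_lt _ (W m₀).ne_zero
    intro m hm
    rw [hterm m (Finset.mem_of_mem_erase hm)]
    rw [Units.val_lt_val]
    refine lt_of_le_of_ne (hmax m (Finset.mem_of_mem_erase hm)) ?_
    exact fun h => (Finset.ne_of_mem_erase hm) (hWinj h)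
  have hvt : M.v (t m₀) = (W m₀ : Γ₀) := hterm m₀ hm₀
  have hsum : M.v (t m₀ + ∑ m ∈ P.support.erase m₀, t m) = (W m₀ : Γ₀) := by
    rw [Valuation.map_add_eq_of_lt_left _ (by rw [hvt]; exact hrest), hvt]
  rw [hev] at hsum
  simp only [map_zero] at hsum
  exact (W m₀).ne_zero hsum.symm
end Core
section Main
set_option synthInstance.maxHeartbeats 1000000
set_option maxHeartbeats 1000000
variable {K Γ₀ : Type u} [Field K] [LinearOrderedCommGroupWithZero Γ₀] (M : CVDF K Γ₀)

lemma iter_mem_subfield (F : Subfield K) (hσF : ∀ x ∈ F, M.σ x ∈ F)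
    {c : K} (hc : c ∈ F) (k : ℕ) : (⇑M.σ)^[k] c ∈ F := by
  induction k with
  | zero => exact hc
  | succ k ih => rw [Function.iterate_succ_apply']; exact hσF _ ih

lemma trfIndep_translate (F : Subfield K) (hσF : ∀ x ∈ F, M.σ x ∈ F)
    {c : K} (hc : c ∈ F) {b : K}
    (hb : TrfIndep M.σ (F : Set K) (fun _ : Fin 1 => b)) :
    TrfIndep M.σ (F : Set K) (fun _ : Fin 1 => b + c) := by
  intro P hP hev
  classical
  set cc : Fin 1 × ℕ → F := fun p => ⟨(⇑M.σ)^[p.2] c, iter_mem_subfield M F hσF hc p.2⟩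
    with hcc_def
  set P₀ : MvPolynomial (Fin 1 × ℕ) F :=
    ∑ m ∈ P.support, MvPolynomial.monomial m (⟨MvPolynomial.coeff m P, hP m⟩ : F) with hP₀_def
  have hmap : MvPolynomial.map (F.subtype : F →+* K) P₀ = P := by
    rw [hP₀_def, map_sum]
    simp only [MvPolynomial.map_monomial]
    exact P.support_sum_monomial_coeff
  set Q₀ : MvPolynomial (Fin 1 × ℕ) F :=
    MvPolynomial.bind₁ (fun p : Fin 1 × ℕ => MvPolynomial.X p + MvPolynomial.C (cc p)) P₀
    with hQ₀_def
  set Q : DiffPoly 1 K := MvPolynomial.map (F.subtype : F →+* K) Q₀ with hQ_def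
  have hQform : Q = MvPolynomial.bind₁
      (fun p : Fin 1 × ℕ => MvPolynomial.X p + MvPolynomial.C ((⇑M.σ)^[p.2] c)) P := by
    have hfun : (fun i : Fin 1 × ℕ =>
        MvPolynomial.map (F.subtype : F →+* K) (MvPolynomial.X i + MvPolynomial.C (cc i))) =
        fun p : Fin 1 × ℕ => MvPolynomial.X p + MvPolynomial.C ((⇑M.σ)^[p.2] c) := by
      funext p
      rw [map_add, MvPolynomial.map_X, MvPolynomial.map_C]
      rfl
    rw [hQ_def, hQ₀_def, MvPolynomial.map_bind₁, hmap, hfun]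
  have hQcoeff : coeffsIn (F : Set K) Q := by
    intro m
    rw [hQ_def, MvPolynomial.coeff_map]
    exact (MvPolynomial.coeff m Q₀).2
  have haev : ∀ (f : Fin 1 × ℕ → K) (q : DiffPoly 1 K),
      MvPolynomial.aeval f q = MvPolynomial.eval f q := by
    intro f q
    rw [← MvPolynomial.coe_aeval_eq_eval]
    rfl
  have hQev : diffEval M.σ (fun _ : Fin 1 => b) Q = 0 := by
    rw [diffEval] at hev ⊢
    rw [hQform, ← haev, MvPolynomial.aeval_bind₁]
    have hfun2 : (fun i : Fin 1 × ℕ => MvPolynomial.aeval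
        (fun p : Fin 1 × ℕ => (⇑M.σ)^[p.2] ((fun _ : Fin 1 => b) p.1))
        (MvPolynomial.X i + MvPolynomial.C ((⇑M.σ)^[i.2] c))) =
        fun p : Fin 1 × ℕ => (⇑M.σ)^[p.2] ((fun _ : Fin 1 => b + c) p.1) := by
      funext i
      rw [map_add, MvPolynomial.aeval_X, MvPolynomial.aeval_C]
      simp only [Algebra.algebraMap_self_apply]
      rw [iterate_map_add]
    rw [hfun2, haev]
    exact hev
  have hQ0 : Q = 0 := hb Q hQcoeff hQev
  have hrecover : P = MvPolynomial.bind₁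
      (fun p : Fin 1 × ℕ => MvPolynomial.X p - MvPolynomial.C ((⇑M.σ)^[p.2] c)) Q := by
    have hcomp : (fun i : Fin 1 × ℕ => MvPolynomial.bind₁
        (fun p : Fin 1 × ℕ => MvPolynomial.X p - MvPolynomial.C ((⇑M.σ)^[p.2] c))
        (MvPolynomial.X i + MvPolynomial.C ((⇑M.σ)^[i.2] c))) =
        (MvPolynomial.X : Fin 1 × ℕ → DiffPoly 1 K) := by
      funext i
      rw [map_add, MvPolynomial.bind₁_X_right, MvPolynomial.algHom_C, MvPolynomial.algebraMap_eq, sub_add_cancel]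
    rw [hQform, MvPolynomial.bind₁_bind₁, hcomp, MvPolynomial.bind₁_X_left, AlgHom.id_apply]
  rw [hrecover, hQ0, map_zero]

end Main


/-- A lift of the residue difference field in a model of ωVFA is
transformally algebraically closed in the field. Here `F` is a difference subfield
(`hσF`), trivially valued (`htriv`), and mapped onto the residue field by the residue
map (`hlift`: every element of the valuation ring is congruent mod the maximal ideal
to an element of `F`; injectivity of `res` on `F` is automatic from `htriv`). -/
theorem lift_of_residue_field_transformally_algebraically_closed
    {K Γ₀ : Type u} [Field K] [LinearOrderedCommGroupWithZero Γ₀]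
    (M : CVDF K Γ₀) (F : Subfield K)
    (hσF : ∀ x ∈ F, M.σ x ∈ F)
    (htriv : ∀ x ∈ F, x ≠ 0 → M.v x = 1)
    (hlift : ∀ x : K, M.v x ≤ 1 → ∃ c ∈ F, M.v (x - c) < 1) :
    ∀ a : K, TrfAlgebraic M.σ (F : Set K) a → a ∈ F := by
  intro a ha
  by_contra haF
  have ha0 : a ≠ 0 := fun h => haF (h ▸ F.zero_mem)
  have hva : M.v a = 1 := by
    by_contra hv
    exact ha (trfIndep_of_v_ne_one M F htriv a ha0 hv)
  obtain ⟨c, hcF, hvc⟩ := hlift a hva.le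
  have hb0 : a - c ≠ 0 := sub_ne_zero.mpr fun h => haF (h ▸ hcF)
  have hvb : M.v (a - c) ≠ 1 := ne_of_lt hvc
  have hbind := trfIndep_of_v_ne_one M F htriv (a - c) hb0 hvb
  have htrans := trfIndep_translate M F hσF hcF hbind
  have hfun : (fun _ : Fin 1 => a - c + c) = fun _ : Fin 1 => a := by
    funext; ring
  rw [hfun] at htrans
  exact ha htrans
end

section
/- For a difference domain D with fraction difference field F and any difference variety X over F of transformal dimension d, there is a difference domain D' with D ⊆ D' ⊆ F and D' finitely generated over D, such that trf.dim_K(X^f) ≤ trf.dim_D(X) for every difference-ring homomorphism f: D' → (K,σ) into a difference field. -/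
/- Statement 7: after a finitely generated localization of the base difference domain, the transformal dimension of reductions does not go up (Lemma 3.***). -/


open MvPolynomial

universe u

/-- Transformal transcendence degree of a (finite) tuple over `F`: the largest size
of a transformally independent subtuple. -/
noncomputable def trfDeg {K : Type u} [Field K] (σ : K →+* K) (F : Set K) {n : ℕ}
    (a : Fin n → K) : ℕ :=
  sSup {d | ∃ ι : Fin d ↪ Fin n, TrfIndep σ F (a ∘ ι)}

/-- The difference subfield generated by a set. -/
def diffClosure {K : Type u} [Field K] (σ : K →+* K) (S : Set K) : Subfield K :=
  Subfield.closure (⋃ k : ℕ, (⇑σ)^[k] '' S)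

/-- An extension of the difference field `(K, σ)`. -/
structure DiffFieldExt (K : Type u) [Field K] (σ : K →+* K) : Type (u + 1) where
  carrier : Type u
  [field : Field carrier]
  τ : carrier →+* carrier
  e : K →+* carrier
  comm : ∀ x, e (σ x) = τ (e x)

attribute [instance] DiffFieldExt.field

/-- The zero set, in an extension, of a finite family of difference polynomials. -/
noncomputable def DiffFieldExt.zeros {K : Type u} [Field K] {σ : K →+* K}
    (E : DiffFieldExt K σ) {n : ℕ} (defs : Finset (DiffPoly n K)) :
    Set (Fin n → E.carrier) :=
  {a | ∀ P ∈ defs, diffEval E.τ a (MvPolynomial.map E.e P) = 0}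

/-- The transformal dimension of the difference variety cut out by `defs`:
the maximal transformal transcendence degree over `K` of a point of the variety in a
difference field extension of `K`. -/
noncomputable def trfDim {K : Type u} [Field K] (σ : K →+* K) {n : ℕ}
    (defs : Finset (DiffPoly n K)) : ℕ :=
  sSup {d | ∃ E : DiffFieldExt K σ, ∃ a ∈ E.zeros defs, d ≤ trfDeg E.τ (Set.range E.e) a}

/-- Restriction of `σ` to a `σ`-closed subfield. -/
def restrictσ {K : Type u} [Field K] (σ : K →+* K) (F : Subfield K)
    (h : ∀ x ∈ F, σ x ∈ F) : ↥F →+* ↥F where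
  toFun x := ⟨σ x, h x x.2⟩
  map_one' := by ext; simp
  map_mul' x y := by ext; simp
  map_zero' := by ext; simp
  map_add' x y := by ext; simp


section Shift
variable {K : Type u} [CommRing K] (σ : K →+* K) (n : ℕ)

/-- The shift endomorphism of the difference polynomial ring. -/
noncomputable def shiftHom : DiffPoly n K →+* DiffPoly n K :=
  (MvPolynomial.rename (fun p : Fin n × ℕ => (p.1, p.2+1))).toRingHom.comp (MvPolynomial.map σ)

@[simp] lemma shiftHom_C (x : K) : shiftHom σ n (C x) = C (σ x) := by
  simp [shiftHom]

@[simp] lemma shiftHom_X (i : Fin n) (k : ℕ) :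
    shiftHom σ n (X (i, k)) = X (i, k+1) := by
  simp [shiftHom]

@[simp] lemma shiftHom_X' (p : Fin n × ℕ) :
    shiftHom σ n (X p) = X (p.1, p.2+1) := by
  simp [shiftHom]

lemma shiftHom_injective (hσ : Function.Injective σ) :
    Function.Injective (shiftHom σ n) := by
  have h1 : Function.Injective (⇑(MvPolynomial.rename (R := K) (fun p : Fin n × ℕ => (p.1, p.2+1)))) :=
    rename_injective _ (fun a b hab => by
      cases a; cases b; simpa using hab)
  exact fun p q hpq => map_injective σ hσ (h1 hpq)

lemma shiftHom_iterate_X (i : Fin n) (k : ℕ) :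
    (⇑(shiftHom σ n))^[k] (X (i, 0)) = X (i, k) := by
  induction k with
  | zero => simp
  | succ m ih => rw [Function.iterate_succ_apply', ih]; simp

/-- Transport of the shift along a coefficient homomorphism compatible with the σ's. -/
lemma map_comp_shiftHom {K' : Type u} [CommRing K'] (σ' : K' →+* K') (g : K →+* K')
    (hg : ∀ x, g (σ x) = σ' (g x)) :
    (MvPolynomial.map (σ := Fin n × ℕ) g).comp (shiftHom σ n)
      = (shiftHom σ' n).comp (MvPolynomial.map g) := by
  apply MvPolynomial.ringHom_ext <;> intro r <;> simp [hg]

lemma map_shiftHom {K' : Type u} [CommRing K'] (σ' : K' →+* K') (g : K →+* K')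
    (hg : ∀ x, g (σ x) = σ' (g x)) (p : DiffPoly n K) :
    MvPolynomial.map (σ := Fin n × ℕ) g (shiftHom σ n p)
      = shiftHom σ' n (MvPolynomial.map g p) :=
  RingHom.congr_fun (map_comp_shiftHom σ n σ' g hg) p

end Shift

section Perfect
variable {R : Type*} [CommRing R] (S : R →+* R)

/-- A perfect difference ideal (as a set). -/
structure IsPerfect (I : Set R) : Prop where
  zero : (0:R) ∈ I
  add : ∀ {x y}, x ∈ I → y ∈ I → x + y ∈ I
  mul : ∀ (r : R) {x}, x ∈ I → r * x ∈ I
  shift : ∀ {x}, x ∈ I → S x ∈ I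
  root : ∀ (x : R) (l : List ℕ), (l.map (fun k => (⇑S)^[k] x)).prod ∈ I → x ∈ I

/-- Membership in the perfect difference ideal generated by a set. -/
inductive PerfMem (X : Set R) : R → Prop
  | base {x} : x ∈ X → PerfMem X x
  | zero : PerfMem X 0
  | add {x y} : PerfMem X x → PerfMem X y → PerfMem X (x+y)
  | mul (r : R) {x} : PerfMem X x → PerfMem X (r*x)
  | shift {x} : PerfMem X x → PerfMem X (S x)
  | root (x : R) (l : List ℕ) :
      PerfMem X ((l.map (fun k => (⇑S)^[k] x)).prod) → PerfMem X x

lemma isPerfect_perfMem (X : Set R) : IsPerfect S {z | PerfMem S X z} where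
  zero := PerfMem.zero
  add := PerfMem.add
  mul := fun r {x} h => PerfMem.mul r h
  shift := fun {x} h => PerfMem.shift h
  root := fun x l h => PerfMem.root x l h

lemma perfMem_min {X I : Set R} (hI : IsPerfect S I) (hXI : X ⊆ I) {z : R}
    (h : PerfMem S X z) : z ∈ I := by
  induction h with
  | base hx => exact hXI hx
  | zero => exact hI.zero
  | add _ _ ih1 ih2 => exact hI.add ih1 ih2
  | mul r _ ih => exact hI.mul r ih
  | shift _ ih => exact hI.shift ih
  | root x l _ ih => exact hI.root x l ih
variable {S}


lemma PerfMem.mul' {X : Set R} {x : R} (h : PerfMem S X x) (r : R) : PerfMem S X (x * r) :=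
  mul_comm r x ▸ PerfMem.mul r h

lemma PerfMem.iter {X : Set R} {x : R} (h : PerfMem S X x) (k : ℕ) :
    PerfMem S X ((⇑S)^[k] x) := by
  induction k with
  | zero => simpa
  | succ m ih => rw [Function.iterate_succ_apply']; exact ih.shift

lemma PerfMem.listProd {X : Set R} {x : R} (h : PerfMem S X x) (l : List ℕ) :
    PerfMem S X (x * (l.map (fun k => (⇑S)^[k] x)).prod) := by
  induction l with
  | nil => simpa using h.mul' 1
  | cons a t ih =>
      have : x * ((a :: t).map (fun k => (⇑S)^[k] x)).prod
          = (⇑S)^[a] x * (x * (t.map (fun k => (⇑S)^[k] x)).prod) := by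
        simp [List.map_cons]; ring
      rw [this]
      exact PerfMem.mul _ ih

lemma iter_listProd_mul (l : List ℕ) (a b : R) :
    (l.map (fun k => (⇑S)^[k] (a*b))).prod
      = (l.map (fun k => (⇑S)^[k] a)).prod * (l.map (fun k => (⇑S)^[k] b)).prod := by
  induction l with
  | nil => simp
  | cons c t ih => simp [List.map_cons, ih, iterate_map_mul]; ring

lemma IsPerfect.mem_mul {I : Set R} (hI : IsPerfect S I) {x : R} (hx : x ∈ I) (r : R) :
    x * r ∈ I := mul_comm r x ▸ hI.mul r hx

/-- the key square trick :  z * S z ∈ I → z ∈ I -/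
lemma IsPerfect.root2 {I : Set R} (hI : IsPerfect S I) {z : R} (h : z * S z ∈ I) : z ∈ I := by
  refine hI.root z [0,1] ?_
  simpa using h

lemma IsPerfect.rootl {I : Set R} (hI : IsPerfect S I) {z : R} (l : List ℕ)
    (h : z * (l.map (fun k => (⇑S)^[k] z)).prod ∈ I) : z ∈ I := by
  refine hI.root z (0::l) ?_
  simpa using h

/-- Cohn's product lemma. -/
theorem cohn_mul {P : Set R} (hP : IsPerfect S P) {x y : R} (hxy : x * y ∈ P) :
    ∀ {t₁}, PerfMem S (P ∪ {x}) t₁ → ∀ {t₂}, PerfMem S (P ∪ {y}) t₂ → t₁ * t₂ ∈ P := by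
  intro t₁ h₁
  induction h₁ with
  | @base t₁ ht₁ =>
      rcases ht₁ with ht₁ | ht₁
      · exact fun {t₂} _ => hP.mem_mul ht₁ t₂
      · -- t₁ = x : inner induction
        rcases Set.mem_singleton_iff.mp ht₁ with rfl
        intro t₂ h₂
        induction h₂ with
        | @base t₂ ht₂ =>
            rcases ht₂ with ht₂ | ht₂
            · exact hP.mul _ ht₂
            · rcases Set.mem_singleton_iff.mp ht₂ with rfl; exact hxy
        | zero => simpa using hP.zero
        | @add a b _ _ iha ihb => rw [mul_add]; exact hP.add iha ihb
        | @mul r a _ ih =>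
            have : t₁ * (r * a) = r * (t₁ * a) := by ring
            rw [this]; exact hP.mul r ih
        | @shift a _ ih =>
            refine hP.root2 ?_
            have key : (t₁ * S a) * S (t₁ * S a) = S (t₁ * a) * (t₁ * S (S a)) := by
              simp [map_mul]; ring
            rw [key]
            exact hP.mem_mul (hP.shift ih) _
        | @root a l _ ih =>
            refine hP.rootl l ?_
            have key : t₁ * a * (l.map (fun k => (⇑S)^[k] (t₁ * a))).prod
                = (t₁ * (l.map (fun k => (⇑S)^[k] a)).prod)
                  * (a * (l.map (fun k => (⇑S)^[k] t₁)).prod) := by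
              rw [iter_listProd_mul]; ring
            rw [key]
            exact hP.mem_mul ih _
  | zero => intro t₂ _; simpa using hP.zero
  | @add a b _ _ iha ihb => intro t₂ h₂; rw [add_mul]; exact hP.add (iha h₂) (ihb h₂)
  | @mul r a _ ih =>
      intro t₂ h₂
      have : r * a * t₂ = r * (a * t₂) := by ring
      rw [this]; exact hP.mul r (ih h₂)
  | @shift a _ ih =>
      intro t₂ h₂
      refine hP.root2 ?_
      have key : (S a * t₂) * S (S a * t₂) = S (a * t₂) * (t₂ * S (S a)) := by
        simp [map_mul]; ring
      rw [key]
      exact hP.mem_mul (hP.shift (ih h₂)) _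
  | @root a l _ ih =>
      intro t₂ h₂
      refine hP.rootl l ?_
      have key : a * t₂ * (l.map (fun k => (⇑S)^[k] (a * t₂))).prod
          = ((l.map (fun k => (⇑S)^[k] a)).prod * (t₂ * (l.map (fun k => (⇑S)^[k] t₂)).prod)) * a := by
        rw [iter_listProd_mul]; ring
      rw [key]
      exact hP.mem_mul (ih (h₂.listProd l)) _

end Perfect


section Zorn
variable {R : Type*} [CommRing R] (S : R →+* R)

theorem exists_prime_perfect (X T : Set R)
    (hT1 : (1:R) ∈ T) (hTmul : ∀ {a b}, a ∈ T → b ∈ T → a*b ∈ T)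
    (hdisj : ∀ z ∈ T, ¬ PerfMem S X z) :
    ∃ P : Set R, IsPerfect S P ∧ X ⊆ P ∧ (∀ z ∈ T, z ∉ P) ∧
      (∀ a b : R, a*b ∈ P → a ∈ P ∨ b ∈ P) ∧ (1:R) ∉ P := by
  classical
  set 𝒮 : Set (Set R) := {I | IsPerfect S I ∧ X ⊆ I ∧ ∀ z ∈ T, z ∉ I} with h𝒮
  have hbase : {z | PerfMem S X z} ∈ 𝒮 :=
    ⟨isPerfect_perfMem S X, fun x hx => PerfMem.base hx, hdisj⟩
  have hchaincond : ∀ c ⊆ 𝒮, IsChain (fun x1 x2 => x1 ⊆ x2) c → c.Nonempty →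
      ∃ ub ∈ 𝒮, ∀ s ∈ c, s ⊆ ub := by
    rintro c hc hchain ⟨I₀, hI₀⟩
    refine ⟨⋃₀ c, ⟨?_, ?_, ?_⟩, fun s hs => Set.subset_sUnion_of_mem hs⟩
    · constructor
      · exact Set.mem_sUnion.2 ⟨I₀, hI₀, (hc hI₀).1.zero⟩
      · rintro x y ⟨I₁, hI₁, hx⟩ ⟨I₂, hI₂, hy⟩
        rcases hchain.total hI₁ hI₂ with h | h
        · exact ⟨I₂, hI₂, (hc hI₂).1.add (h hx) hy⟩
        · exact ⟨I₁, hI₁, (hc hI₁).1.add hx (h hy)⟩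
      · rintro r x ⟨I₁, hI₁, hx⟩; exact ⟨I₁, hI₁, (hc hI₁).1.mul r hx⟩
      · rintro x ⟨I₁, hI₁, hx⟩; exact ⟨I₁, hI₁, (hc hI₁).1.shift hx⟩
      · rintro x l ⟨I₁, hI₁, hx⟩; exact ⟨I₁, hI₁, (hc hI₁).1.root x l hx⟩
    · exact fun x hx => Set.mem_sUnion.2 ⟨I₀, hI₀, (hc hI₀).2.1 hx⟩
    · rintro z hz ⟨I₁, hI₁, hzI⟩; exact (hc hI₁).2.2 z hz hzI
  obtain ⟨M, -, hMmax⟩ := zorn_subset_nonempty 𝒮 hchaincond _ hbase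
  obtain ⟨⟨hMperf, hMX, hMT⟩, hMmax'⟩ := hMmax
  have hM1 : (1:R) ∉ M := fun h => hMT 1 hT1 h
  refine ⟨M, hMperf, hMX, hMT, ?_, hM1⟩
  intro a b hab
  by_contra hcon
  push_neg at hcon
  obtain ⟨ha, hb⟩ := hcon
  have key : ∀ w : R, w ∉ M → ∃ t ∈ T, PerfMem S (M ∪ {w}) t := by
    intro w hw
    by_contra hno
    push_neg at hno
    have hmem : {z | PerfMem S (M ∪ {w}) z} ∈ 𝒮 := by
      refine ⟨isPerfect_perfMem _ _, ?_, ?_⟩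
      · exact fun x hx => PerfMem.base (Or.inl (hMX hx))
      · exact fun z hz hzP => hno z hz hzP
    have hsub : M ⊆ {z | PerfMem S (M ∪ {w}) z} := fun x hx => PerfMem.base (Or.inl hx)
    have := hMmax' hmem hsub
    exact hw (this (PerfMem.base (Or.inr rfl)))
  obtain ⟨t₁, ht₁T, ht₁⟩ := key a ha
  obtain ⟨t₂, ht₂T, ht₂⟩ := key b hb
  exact hMT _ (hTmul ht₁T ht₂T) (cohn_mul hMperf hab ht₁ ht₂)

end Zorn

section Pullback
variable {K L : Type*} [CommRing K] [CommRing L]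

lemma exists_pullback (e : K →+* L) {ι : Type*} (p : MvPolynomial ι L)
    (h : ∀ m, MvPolynomial.coeff m p ∈ Set.range e) :
    ∃ q : MvPolynomial ι K, MvPolynomial.map e q = p := by
  classical
  choose c hc using h
  refine ⟨∑ v ∈ p.support, monomial v (c v), ?_⟩
  rw [map_sum]
  simp only [MvPolynomial.map_monomial, hc]
  exact support_sum_monomial_coeff p

end Pullback

section Vanishing
variable {K₀ : Type u} [CommRing K₀] {L : Type u} [Field L]

lemma isPerfect_vanishing (σ₀ : K₀ →+* K₀) (τ : L →+* L) (g : K₀ →+* L)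
    (hg : ∀ x, g (σ₀ x) = τ (g x)) {n : ℕ} (b : Fin n → L) :
    IsPerfect (shiftHom σ₀ n) {z : DiffPoly n K₀ | diffEval τ b (MvPolynomial.map g z) = 0} := by
  set ev : DiffPoly n K₀ →+* L := eval₂Hom g (fun p => (⇑τ)^[p.2] (b p.1)) with hev
  have heval : ∀ z : DiffPoly n K₀, diffEval τ b (MvPolynomial.map g z) = ev z := by
    intro z; rw [diffEval, eval_map]; rfl
  have hshift : ∀ z, ev (shiftHom σ₀ n z) = τ (ev z) := by
    have : ev.comp (shiftHom σ₀ n) = τ.comp ev := by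
      apply MvPolynomial.ringHom_ext
      · intro r; simp [hev, hg]
      · intro p
        rcases p with ⟨i, k⟩
        simp [hev, Function.iterate_succ_apply']
    exact fun z => RingHom.congr_fun this z
  have hiter : ∀ (k : ℕ) (z), ev ((⇑(shiftHom σ₀ n))^[k] z) = (⇑τ)^[k] (ev z) := by
    intro k
    induction k with
    | zero => simp
    | succ m ih =>
        intro z
        rw [Function.iterate_succ_apply', Function.iterate_succ_apply', hshift, ih]
  have hτinj : Function.Injective τ := τ.injective
  constructor
  · simp [heval]
  · intro x y hx hy; simp only [Set.mem_setOf_eq, heval] at *; rw [map_add, hx, hy, add_zero]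
  · intro r x hx; simp only [Set.mem_setOf_eq, heval] at *; rw [map_mul, hx, mul_zero]
  · intro x hx; simp only [Set.mem_setOf_eq, heval] at *; rw [hshift, hx, map_zero]
  · intro x l hx
    simp only [Set.mem_setOf_eq, heval] at *
    rw [map_list_prod, List.map_map] at hx
    by_contra hx0
    refine List.prod_ne_zero ?_ hx
    intro h0
    simp only [List.mem_map, Function.comp_apply] at h0
    obtain ⟨k, -, hk⟩ := h0
    rw [hiter] at hk
    exact hx0 (by
      have : (⇑τ)^[k] (ev x) = (⇑τ)^[k] 0 := by simpa using hk
      simpa using (Function.Injective.iterate hτinj k) this)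

end Vanishing

section Extension
variable {F : Type u} [Field F] (σ : F →+* F) {n : ℕ}

lemma exists_extension_of_prime (P : Set (DiffPoly n F)) (hP : IsPerfect (shiftHom σ n) P)
    (hprime : ∀ a b : DiffPoly n F, a * b ∈ P → a ∈ P ∨ b ∈ P)
    (hone : (1 : DiffPoly n F) ∉ P) :
    ∃ (E : DiffFieldExt F σ) (a : Fin n → E.carrier),
      ∀ q : DiffPoly n F, diffEval E.τ a (MvPolynomial.map E.e q) = 0 ↔ q ∈ P := by
  classical
  set Sf := shiftHom σ n with hSf
  set P_id : Ideal (DiffPoly n F) :=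
    { carrier := P
      add_mem' := fun hx hy => hP.add hx hy
      zero_mem' := hP.zero
      smul_mem' := fun r x hx => by simpa [smul_eq_mul] using hP.mul r hx } with hP_id
  have hPmem : ∀ {z : DiffPoly n F}, z ∈ P_id ↔ z ∈ P := Iff.rfl
  haveI : P_id.IsPrime := by
    rw [Ideal.isPrime_iff]
    constructor
    · intro h
      exact hone (show (1 : DiffPoly n F) ∈ P_id by rw [h]; exact Submodule.mem_top)
    · exact fun {a b} hab => hprime a b hab
  set Q := DiffPoly n F ⧸ P_id
  haveI : IsDomain Q := Ideal.Quotient.isDomain P_id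
  set L := FractionRing Q with hL
  set mk : DiffPoly n F →+* Q := Ideal.Quotient.mk P_id with hmk
  set algQ : Q →+* L := algebraMap Q L with halgQ
  have halgQinj : Function.Injective algQ := IsFractionRing.injective Q L
  have hle : P_id ≤ Ideal.comap Sf P_id := fun x hx => hP.shift hx
  set Sq : Q →+* Q := Ideal.quotientMap P_id Sf hle with hSq
  have hSqmk : ∀ x, Sq (mk x) = mk (Sf x) := fun x => Ideal.quotientMap_mk
  have hSqinj : Function.Injective Sq := by
    rw [injective_iff_map_eq_zero]
    intro a ha
    obtain ⟨x, rfl⟩ := Ideal.Quotient.mk_surjective (I := P_id) a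
    rw [hSqmk, Ideal.Quotient.eq_zero_iff_mem] at ha
    rw [Ideal.Quotient.eq_zero_iff_mem]
    refine hP.root x [1] ?_
    simpa using hPmem.1 ha
  have hg0inj : Function.Injective (algQ.comp Sq) := halgQinj.comp hSqinj
  set τ : L →+* L := IsFractionRing.lift hg0inj with hτ
  have hτalg : ∀ q : Q, τ (algQ q) = algQ (Sq q) := fun q => IsFractionRing.lift_algebraMap hg0inj q
  set e' : DiffPoly n F →+* L := algQ.comp mk with he'
  have hτe' : ∀ r, τ (e' r) = e' (Sf r) := by
    intro r; rw [he']; simp only [RingHom.comp_apply]; rw [hτalg, hSqmk]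
  have hτe'iter : ∀ (k : ℕ) (r), (⇑τ)^[k] (e' r) = e' ((⇑Sf)^[k] r) := by
    intro k
    induction k with
    | zero => intro r; simp
    | succ m ih =>
        intro r
        rw [Function.iterate_succ_apply', Function.iterate_succ_apply', ih, hτe']
  set e : F →+* L := e'.comp (MvPolynomial.C) with he
  have hcomm : ∀ x : F, e (σ x) = τ (e x) := by
    intro x
    rw [he]; simp only [RingHom.comp_apply]
    rw [hτe']
    congr 1
    rw [hSf, shiftHom_C]
  set E : DiffFieldExt F σ := ⟨L, τ, e, hcomm⟩ with hE
  set a : Fin n → L := fun i => e' (MvPolynomial.X (i, 0)) with ha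
  refine ⟨E, a, ?_⟩
  have hkey : ∀ q : DiffPoly n F, diffEval τ a (MvPolynomial.map e q) = e' q := by
    have : (eval₂Hom e (fun p : Fin n × ℕ => (⇑τ)^[p.2] (a p.1))) = e' := by
      apply MvPolynomial.ringHom_ext
      · intro r; simp [he]
      · rintro ⟨i, k⟩
        simp only [eval₂Hom_X']
        rw [ha, hτe'iter, hSf, shiftHom_iterate_X]
    intro q
    rw [diffEval, eval_map]
    exact RingHom.congr_fun this q
  intro q
  rw [hkey]
  constructor
  · intro h
    have : mk q = 0 := halgQinj (by rw [map_zero]; exact h)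
    exact (Ideal.Quotient.eq_zero_iff_mem).1 this
  · intro h
    have : mk q = 0 := (Ideal.Quotient.eq_zero_iff_mem).2 h
    rw [he']; simp [this]

end Extension

section Indep
variable {K : Type u} [Field K] (σK : K →+* K)

/-- renaming along an embedding of index sets. -/
lemma diffEval_rename {m m' : ℕ} (c : Fin m → K) (κ : Fin m' → Fin m)
    (P : DiffPoly m' K) :
    diffEval σK c (rename (fun p : Fin m' × ℕ => (κ p.1, p.2)) P)
      = diffEval σK (c ∘ κ) P := by
  rw [diffEval, diffEval, eval_rename]
  rfl

lemma coeffsIn_rename {m m' : ℕ} (Fs : Set K) (h0 : (0:K) ∈ Fs)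
    (ρ : Fin m' × ℕ → Fin m × ℕ) {P : DiffPoly m' K} (h : coeffsIn Fs P)
    (hρ : Function.Injective ρ) : coeffsIn Fs (rename ρ P) := by
  intro mm
  by_cases hz : MvPolynomial.coeff mm (rename ρ P) = 0
  · rw [hz]; exact h0
  · obtain ⟨u, hu, -⟩ := coeff_rename_ne_zero _ _ _ hz
    rw [← hu, coeff_rename_mapDomain ρ hρ]
    exact h u

lemma TrfIndep.restrict {Fs : Set K} (h0 : (0:K) ∈ Fs) {n m m' : ℕ} (c : Fin n → K)
    (ι : Fin m ↪ Fin n) (h : TrfIndep σK Fs (c ∘ ι)) (κ : Fin m' ↪ Fin m) :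
    TrfIndep σK Fs (c ∘ (κ.trans ι)) := by
  intro P hc hev
  set ρ : Fin m' × ℕ → Fin m × ℕ := fun p => (κ p.1, p.2) with hρdef
  have hρ : Function.Injective ρ := by
    rintro ⟨a1, a2⟩ ⟨b1, b2⟩ hab
    simp only [hρdef, Prod.mk.injEq] at hab
    exact Prod.ext (κ.injective hab.1) hab.2
  have := h (rename ρ P) (coeffsIn_rename Fs h0 ρ hc hρ) ?_
  · exact (map_eq_zero_iff _ (rename_injective ρ hρ)).mp this
  · rw [hρdef, diffEval_rename]
    exact hev

lemma trfIndep_of_isEmpty {Fs : Set K} {n : ℕ} (c : Fin 0 → K) :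
    TrfIndep σK Fs c := by
  intro P hc hev
  obtain ⟨r, rfl⟩ := C_surjective (Fin 0 × ℕ) P
  have : r = 0 := by simpa [diffEval] using hev
  rw [this, map_zero]

lemma bddAbove_trfdeg_set {Fs : Set K} {n : ℕ} (c : Fin n → K) :
    BddAbove {d | ∃ ι : Fin d ↪ Fin n, TrfIndep σK Fs (c ∘ ι)} := by
  refine ⟨n, ?_⟩
  rintro d ⟨ι, -⟩
  simpa using Fintype.card_le_of_embedding ι

lemma trfDeg_le {Fs : Set K} {n : ℕ} (c : Fin n → K) : trfDeg σK Fs c ≤ n := by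
  refine csSup_le' ?_
  rintro d ⟨ι, -⟩
  simpa using Fintype.card_le_of_embedding ι

lemma le_trfDeg {Fs : Set K} {n d : ℕ} (c : Fin n → K) (ι : Fin d ↪ Fin n)
    (h : TrfIndep σK Fs (c ∘ ι)) : d ≤ trfDeg σK Fs c :=
  le_csSup (bddAbove_trfdeg_set σK c) ⟨ι, h⟩

lemma bddAbove_trfdim_set {n : ℕ} (defs : Finset (DiffPoly n K)) :
    BddAbove {d | ∃ E : DiffFieldExt K σK, ∃ a ∈ E.zeros defs,
      d ≤ trfDeg E.τ (Set.range E.e) a} := by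
  refine ⟨n, ?_⟩
  rintro d ⟨E, a, -, hle⟩
  exact hle.trans (trfDeg_le E.τ a)

lemma le_trfDim {n d : ℕ} (defs : Finset (DiffPoly n K)) (E : DiffFieldExt K σK)
    (a : Fin n → E.carrier) (ha : a ∈ E.zeros defs)
    (h : d ≤ trfDeg E.τ (Set.range E.e) a) : d ≤ trfDim σK defs :=
  le_csSup (bddAbove_trfdim_set σK defs) ⟨E, a, ha, h⟩

lemma trfDim_le {n : ℕ} (defs : Finset (DiffPoly n K)) {d : ℕ}
    (h : ∀ (E : DiffFieldExt K σK) (a : Fin n → E.carrier), a ∈ E.zeros defs →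
      trfDeg E.τ (Set.range E.e) a ≤ d) : trfDim σK defs ≤ d := by
  refine csSup_le' ?_
  rintro d' ⟨E, a, ha, hle⟩
  exact hle.trans (h E a ha)

end Indep

section Descent
attribute [local instance] Classical.propDecidable

def restrictσR {K : Type u} [CommRing K] (σ : K →+* K) (D : Subring K)
    (h : ∀ x ∈ D, σ x ∈ D) : ↥D →+* ↥D where
  toFun x := ⟨σ x, h x x.2⟩
  map_one' := by ext; simp
  map_mul' x y := by ext; simp
  map_zero' := by ext; simp
  map_add' x y := by ext; simp

@[simp] lemma restrictσR_coe {K : Type u} [CommRing K] (σ : K →+* K) (D : Subring K)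
    (h : ∀ x ∈ D, σ x ∈ D) (x : ↥D) : (restrictσR σ D h x : K) = σ x := rfl

variable {K' : Type u} {K : Type u} [CommRing K'] [CommRing K] {n : ℕ}

lemma map_shiftHom_iter (σ' : K' →+* K') (σK : K →+* K) (g : K' →+* K)
    (hg : ∀ x, g (σ' x) = σK (g x)) (k : ℕ) (p : DiffPoly n K') :
    MvPolynomial.map (σ := Fin n × ℕ) g ((⇑(shiftHom σ' n))^[k] p)
      = (⇑(shiftHom σK n))^[k] (MvPolynomial.map g p) := by
  induction k with
  | zero => simp
  | succ m ih =>
      rw [Function.iterate_succ_apply', Function.iterate_succ_apply',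
        map_shiftHom σ' n σK g hg, ih]

open Classical in
noncomputable def coeffFinset {ι K₀ : Type*} [CommRing K₀] (p : MvPolynomial ι K₀) :
    Finset K₀ := p.support.image (fun m => MvPolynomial.coeff m p)

lemma coeff_mem_of_coeffFinset {F : Type u} [Field F] {ι : Type*} (p : MvPolynomial ι F)
    (D' : Subring F) (hs : (coeffFinset p : Set F) ⊆ (D' : Set F)) :
    ∀ m, MvPolynomial.coeff m p ∈ Set.range D'.subtype := by
  intro m
  by_cases hm : m ∈ p.support
  · have : MvPolynomial.coeff m p ∈ D' := by
      apply hs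
      show MvPolynomial.coeff m p ∈ (coeffFinset p : Set F)
      rw [coeffFinset]
      exact_mod_cast Finset.mem_image_of_mem _ hm
    exact ⟨⟨_, this⟩, rfl⟩
  · simp only [MvPolynomial.notMem_support_iff] at hm
    exact ⟨0, by simp [hm]⟩

variable {F : Type u} [Field F] (σ : F →+* F)

open Classical in
theorem perfMem_descend {defs : Finset (DiffPoly n F)}
    {p : DiffPoly n F} (hp : PerfMem (shiftHom σ n) (↑defs) p) :
    ∃ s : Finset F, ∀ (D' : Subring F) (hσ' : ∀ x ∈ D', σ x ∈ D'),
      (↑s : Set F) ⊆ (D' : Set F) →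
      ∃ p' : DiffPoly n ↥D', MvPolynomial.map D'.subtype p' = p ∧
        PerfMem (shiftHom (restrictσR σ D' hσ') n)
          {z | MvPolynomial.map D'.subtype z ∈ (defs : Set (DiffPoly n F))} p' := by
  induction hp with
  | @base x hx =>
      refine ⟨coeffFinset x, fun D' hσ' hs => ?_⟩
      obtain ⟨x', hx'⟩ := exists_pullback D'.subtype x (coeff_mem_of_coeffFinset x D' hs)
      exact ⟨x', hx', PerfMem.base (by rw [Set.mem_setOf_eq, hx']; exact hx)⟩
  | zero =>
      exact ⟨∅, fun D' hσ' hs => ⟨0, by simp, PerfMem.zero⟩⟩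
  | @add x y _ _ ihx ihy =>
      obtain ⟨s1, h1⟩ := ihx
      obtain ⟨s2, h2⟩ := ihy
      refine ⟨s1 ∪ s2, fun D' hσ' hs => ?_⟩
      rw [Finset.coe_union, Set.union_subset_iff] at hs
      obtain ⟨x', hx', hxd⟩ := h1 D' hσ' hs.1
      obtain ⟨y', hy', hyd⟩ := h2 D' hσ' hs.2
      exact ⟨x' + y', by rw [(MvPolynomial.map D'.subtype).map_add, hx', hy'], PerfMem.add hxd hyd⟩
  | @mul r x _ ihx =>
      obtain ⟨s1, h1⟩ := ihx
      refine ⟨s1 ∪ coeffFinset r, fun D' hσ' hs => ?_⟩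
      rw [Finset.coe_union, Set.union_subset_iff] at hs
      obtain ⟨x', hx', hxd⟩ := h1 D' hσ' hs.1
      obtain ⟨r', hr'⟩ := exists_pullback D'.subtype r (coeff_mem_of_coeffFinset r D' hs.2)
      exact ⟨r' * x', by rw [(MvPolynomial.map D'.subtype).map_mul, hx', hr'], PerfMem.mul r' hxd⟩
  | @shift x _ ihx =>
      obtain ⟨s1, h1⟩ := ihx
      refine ⟨s1, fun D' hσ' hs => ?_⟩
      obtain ⟨x', hx', hxd⟩ := h1 D' hσ' hs
      refine ⟨shiftHom (restrictσR σ D' hσ') n x', ?_, PerfMem.shift hxd⟩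
      rw [map_shiftHom (restrictσR σ D' hσ') n σ D'.subtype (fun z => rfl), hx']
  | @root x l _ ihx =>
      obtain ⟨s1, h1⟩ := ihx
      refine ⟨s1 ∪ coeffFinset x, fun D' hσ' hs => ?_⟩
      rw [Finset.coe_union, Set.union_subset_iff] at hs
      obtain ⟨w', hw', hwd⟩ := h1 D' hσ' hs.1
      obtain ⟨x', hx'⟩ := exists_pullback D'.subtype x (coeff_mem_of_coeffFinset x D' hs.2)
      refine ⟨x', hx', PerfMem.root x' l ?_⟩
      have : MvPolynomial.map D'.subtype
          ((l.map (fun k => (⇑(shiftHom (restrictσR σ D' hσ') n))^[k] x')).prod)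
          = (l.map (fun k => (⇑(shiftHom σ n))^[k] x)).prod := by
        rw [map_list_prod, List.map_map]
        congr 1
        refine List.map_congr_left ?_
        intro k hk
        simp only [Function.comp_apply]
        rw [map_shiftHom_iter (restrictσR σ D' hσ') σ D'.subtype (fun z => rfl), hx']
      have heq : (l.map (fun k => (⇑(shiftHom (restrictσR σ D' hσ') n))^[k] x')).prod = w' := by
        apply MvPolynomial.map_injective D'.subtype D'.subtype_injective
        rw [this, hw']
      rw [heq]
      exact hwd

end Descent

section Relation
variable {F : Type u} [Field F]

lemma exists_relation (σ : F →+* F) {n : ℕ} (defs : Finset (DiffPoly n F)) (m : ℕ)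
    (hdim : trfDim σ defs < m) (J : Fin m ↪ Fin n) :
    ∃ q : DiffPoly m F, q ≠ 0 ∧
      PerfMem (shiftHom σ n) (↑defs) (rename (fun p : Fin m × ℕ => (J p.1, p.2)) q) := by
  by_contra hcon
  push_neg at hcon
  set ρ : Fin m × ℕ → Fin n × ℕ := fun p => (J p.1, p.2) with hρdef
  set T : Set (DiffPoly n F) := {z | ∃ q : DiffPoly m F, q ≠ 0 ∧ z = rename ρ q} with hT
  have hT1 : (1 : DiffPoly n F) ∈ T := ⟨1, one_ne_zero, (map_one _).symm⟩
  have hTmul : ∀ {a b : DiffPoly n F}, a ∈ T → b ∈ T → a * b ∈ T := by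
    rintro a b ⟨qa, hqa, rfl⟩ ⟨qb, hqb, rfl⟩
    exact ⟨qa * qb, mul_ne_zero hqa hqb, (map_mul _ _ _).symm⟩
  have hdisj : ∀ z ∈ T, ¬ PerfMem (shiftHom σ n) (↑defs) z := by
    rintro z ⟨qz, hqz, rfl⟩ hperf
    exact hcon qz hqz hperf
  obtain ⟨P, hPperf, hXP, hPT, hPprime, hP1⟩ :=
    exists_prime_perfect (shiftHom σ n) (↑defs) T hT1 hTmul hdisj
  obtain ⟨E, a, hiff⟩ := exists_extension_of_prime σ P hPperf hPprime hP1
  have haz : a ∈ E.zeros defs := fun Pp hPp => (hiff Pp).2 (hXP hPp)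
  have hind : TrfIndep E.τ (Set.range E.e) (a ∘ J) := by
    intro W hW hWev
    obtain ⟨q₀, rfl⟩ := exists_pullback E.e W hW
    have h1 : diffEval E.τ a (MvPolynomial.map E.e (rename ρ q₀)) = 0 := by
      rw [MvPolynomial.map_rename, hρdef, diffEval_rename]
      exact hWev
    have h2 : rename ρ q₀ ∈ P := (hiff _).1 h1
    by_cases hq0 : q₀ = 0
    · rw [hq0, map_zero]
    · exact absurd h2 (hPT _ ⟨q₀, hq0, rfl⟩)
  have hdeg : m ≤ trfDeg E.τ (Set.range E.e) a := le_trfDeg E.τ a J hind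
  have : m ≤ trfDim σ defs := le_trfDim σ defs E a haz hdeg
  omega

end Relation

/-- For a difference domain `D` (a `σ`-closed subring of its fraction
difference field `F`) and a difference variety `X` over `F` of transformal dimension
`d`, there is a difference domain `D'` with `D ⊆ D' ⊆ F`, finitely generated over `D`,
such that `trf.dim_{K'}(X^f) ≤ d` for every difference-ring homomorphism
`f : D' → (K', σ')` into a difference field. -/
theorem trfDim_not_increased_after_localization
    {F : Type u} [Field F] (σ : F →+* F)
    (D : Subring F) (hσD : ∀ x ∈ D, σ x ∈ D)
    (hfrac : ∀ x : F, ∃ a ∈ D, ∃ b ∈ D, b ≠ 0 ∧ x = a / b)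
    {n : ℕ} (defs : Finset (DiffPoly n F)) :
    ∃ D' : Subring F,
      (D : Set F) ⊆ (D' : Set F) ∧
      -- D' is finitely generated over D as a difference domain
      (∃ s : Finset F,
        D' = Subring.closure ((D : Set F) ∪ ⋃ k : ℕ, (⇑σ)^[k] '' (s : Set F))) ∧
      ∃ hσD' : ∀ x ∈ D', σ x ∈ D',
      -- X is defined over D' : there are defining polynomials with coefficients in D'
      -- cutting out the same difference variety over F
      ∃ defs' : Finset (DiffPoly n ↥D'),
        (∀ E : DiffFieldExt F σ,
          letI := Classical.decEq (DiffPoly n F)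
          E.zeros (defs'.image (MvPolynomial.map D'.subtype)) = E.zeros defs) ∧
        -- for every difference-ring homomorphism f from D' into a difference field,
        -- the transformal dimension of X^f does not exceed trf.dim_D(X):
        ∀ (K' : Type u) [Field K'] (σ' : K' →+* K') (f : ↥D' →+* K'),
          (∀ x : ↥D', f ⟨σ ↑x, hσD' ↑x x.2⟩ = σ' (f x)) →
          letI := Classical.decEq (DiffPoly n K')
          trfDim σ' (defs'.image (MvPolynomial.map f)) ≤ trfDim σ defs := by
  classical
  set d := trfDim σ defs with hd
  have key : ∀ J : Fin (d+1) ↪ Fin n, ∃ q : DiffPoly (d+1) F, q ≠ 0 ∧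
      PerfMem (shiftHom σ n) (↑defs) (rename (fun p : Fin (d+1) × ℕ => (J p.1, p.2)) q) :=
    fun J => exists_relation σ defs (d+1) (by omega) J
  choose q hq0 hqperf using key
  have hm₀ : ∀ J : Fin (d+1) ↪ Fin n, ∃ m₀, MvPolynomial.coeff m₀ (q J) ≠ 0 :=
    fun J => MvPolynomial.ne_zero_iff.mp (hq0 J)
  choose m₀ hm₀ne using hm₀
  choose sJ hsJ using fun J : Fin (d+1) ↪ Fin n => perfMem_descend σ (hqperf J)
  set s : Finset F :=
    (defs.biUnion (fun P => coeffFinset P)) ∪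
    ((Finset.univ : Finset (Fin (d+1) ↪ Fin n)).biUnion
      (fun J => sJ J ∪ coeffFinset (q J) ∪ {(MvPolynomial.coeff (m₀ J) (q J))⁻¹})) with hs
  have hJs : ∀ J : Fin (d+1) ↪ Fin n,
      sJ J ∪ coeffFinset (q J) ∪ {(MvPolynomial.coeff (m₀ J) (q J))⁻¹} ⊆ s :=
    fun J => by
      rw [hs]
      exact (Finset.subset_biUnion_of_mem
        (fun J : Fin (d+1) ↪ Fin n => sJ J ∪ coeffFinset (q J) ∪ {(MvPolynomial.coeff (m₀ J) (q J))⁻¹})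
        (Finset.mem_univ J)).trans Finset.subset_union_right
  have hdefcoe : ∀ P ∈ defs, coeffFinset P ⊆ s :=
    fun P hP => by
      rw [hs]
      exact (Finset.subset_biUnion_of_mem (fun P => coeffFinset P) hP).trans
        Finset.subset_union_left
  set X : Set F := (D : Set F) ∪ ⋃ k : ℕ, (⇑σ)^[k] '' (s : Set F) with hX
  set D' : Subring F := Subring.closure X with hD'
  have hσX : σ '' X ⊆ X := by
    rintro y ⟨x, hx, rfl⟩
    rcases hx with hx | hx
    · exact Or.inl (hσD x hx)
    · rw [Set.mem_iUnion] at hx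
      obtain ⟨k, z, hz, rfl⟩ := hx
      refine Or.inr (Set.mem_iUnion.2 ⟨k+1, z, hz, ?_⟩)
      rw [Function.iterate_succ_apply']
  have hσD' : ∀ x ∈ D', σ x ∈ D' := by
    intro x hx
    have h1 : σ x ∈ (Subring.closure X).map σ := ⟨x, hx, rfl⟩
    rw [RingHom.map_closure] at h1
    exact (Subring.closure_le.2 (hσX.trans Subring.subset_closure)) h1
  have hXD' : X ⊆ (D' : Set F) := Subring.subset_closure
  have hsD' : (s : Set F) ⊆ (D' : Set F) := by
    intro z hz
    exact hXD' (Or.inr (Set.mem_iUnion.2 ⟨0, z, hz, rfl⟩))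
  have hDD' : (D : Set F) ⊆ (D' : Set F) := fun z hz => hXD' (Or.inl hz)
  have hdefsrange : ∀ P ∈ defs, ∃ P' : DiffPoly n ↥D', MvPolynomial.map D'.subtype P' = P := by
    intro P hP
    exact exists_pullback D'.subtype P
      (coeff_mem_of_coeffFinset P D' ((Finset.coe_subset.2 (hdefcoe P hP)).trans hsD'))
  have hmapinj : Function.Injective (MvPolynomial.map (σ := Fin n × ℕ) D'.subtype) :=
    MvPolynomial.map_injective D'.subtype D'.subtype_injective
  set defs' : Finset (DiffPoly n ↥D') :=
    defs.preimage (MvPolynomial.map D'.subtype) (hmapinj.injOn) with hdefs'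
  have hzeros : ∀ E : DiffFieldExt F σ,
      E.zeros (@Finset.image _ _ (Classical.decEq (DiffPoly n F))
        (MvPolynomial.map D'.subtype) defs') = E.zeros defs := by
    intro E
    ext a
    constructor
    · intro ha P hP
      obtain ⟨P', hP'⟩ := hdefsrange P hP
      have hmem : P ∈ @Finset.image _ _ (Classical.decEq (DiffPoly n F))
          (MvPolynomial.map D'.subtype) defs' :=
        (@Finset.mem_image _ _ (Classical.decEq (DiffPoly n F)) _ _ _).2
          ⟨P', Finset.mem_preimage.2 (hP' ▸ hP), hP'⟩
      exact ha P hmem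
    · intro ha P hP
      obtain ⟨P', hmem, rfl⟩ := (@Finset.mem_image _ _ (Classical.decEq (DiffPoly n F)) _ _ _).1 hP
      exact ha _ (Finset.mem_preimage.1 hmem)
  refine ⟨D', hDD', ⟨s, rfl⟩, hσD', defs', fun E => hzeros E, ?_⟩
  intro K' _ σ' f hf
  refine trfDim_le σ' _ ?_
  intro E' b hb
  show sSup {d₀ | ∃ ι : Fin d₀ ↪ Fin n, TrfIndep E'.τ (Set.range E'.e) (b ∘ ι)} ≤ d
  refine csSup_le' ?_
  rintro d₀ ⟨ι, hind⟩
  by_contra hgt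
  push_neg at hgt
  have hle : d + 1 ≤ d₀ := hgt
  set κ : Fin (d+1) ↪ Fin d₀ := Fin.castLEEmb hle with hκ
  set J : Fin (d+1) ↪ Fin n := κ.trans ι with hJ
  have hindJ : TrfIndep E'.τ (Set.range E'.e) (b ∘ J) :=
    TrfIndep.restrict E'.τ (show (0:E'.carrier) ∈ Set.range E'.e from ⟨0, map_zero E'.e⟩)
      b ι hind κ
  -- descend the relation q J to D'
  have hsubJ : (sJ J : Set F) ⊆ (D' : Set F) :=
    (Finset.coe_subset.2 ((Finset.subset_union_left.trans
      Finset.subset_union_left).trans (hJs J))).trans hsD'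
  obtain ⟨p', hp'map, hp'perf⟩ := hsJ J D' hσD' hsubJ
  have hqcoe : (coeffFinset (q J) : Set F) ⊆ (D' : Set F) :=
    (Finset.coe_subset.2 ((Finset.subset_union_right.trans
      Finset.subset_union_left).trans (hJs J))).trans hsD'
  obtain ⟨q', hq'⟩ := exists_pullback D'.subtype (q J)
    (coeff_mem_of_coeffFinset (q J) D' hqcoe)
  have hp'eq : p' = rename (fun p : Fin (d+1) × ℕ => (J p.1, p.2)) q' := by
    apply hmapinj
    rw [hp'map, MvPolynomial.map_rename, hq']
  -- the vanishing ideal at b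
  set g : ↥D' →+* E'.carrier := E'.e.comp f with hg
  have hgcompat : ∀ x : ↥D', g (restrictσR σ D' hσD' x) = E'.τ (g x) := by
    intro x
    rw [hg]
    simp only [RingHom.comp_apply]
    have : restrictσR σ D' hσD' x = ⟨σ ↑x, hσD' ↑x x.2⟩ := rfl
    rw [this, hf x, E'.comm]
  have hIperf := isPerfect_vanishing (restrictσR σ D' hσD') E'.τ g hgcompat b
  have hbase : {z : DiffPoly n ↥D' | MvPolynomial.map D'.subtype z ∈ (defs : Set (DiffPoly n F))}
      ⊆ {z : DiffPoly n ↥D' | diffEval E'.τ b (MvPolynomial.map g z) = 0} := by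
    intro z hz
    have hz' : z ∈ defs' := Finset.mem_preimage.2 hz
    have hmem : MvPolynomial.map f z ∈ @Finset.image _ _ (Classical.decEq (DiffPoly n K'))
        (⇑(MvPolynomial.map f)) defs' :=
      @Finset.mem_image_of_mem _ _ (Classical.decEq (DiffPoly n K')) (⇑(MvPolynomial.map f)) (a := z) (s := defs') hz'
    have := hb _ hmem
    rwa [MvPolynomial.map_map] at this
  have hp'van : diffEval E'.τ b (MvPolynomial.map g p') = 0 :=
    perfMem_min (shiftHom (restrictσR σ D' hσD') n) hIperf hbase hp'perf
  have heval : diffEval E'.τ (b ∘ J) (MvPolynomial.map g q') = 0 := by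
    rw [hp'eq, MvPolynomial.map_rename, diffEval_rename] at hp'van
    exact hp'van
  have hcoeffs : coeffsIn (Set.range E'.e) (MvPolynomial.map g q') := by
    intro mm
    rw [MvPolynomial.coeff_map]
    exact ⟨f (MvPolynomial.coeff mm q'), rfl⟩
  have hzero : MvPolynomial.map g q' = 0 := hindJ _ hcoeffs heval
  -- but the coefficient of m₀ J is nonzero
  set c : F := MvPolynomial.coeff (m₀ J) (q J) with hc
  have hcinv : c⁻¹ ∈ D' := by
    apply hsD'
    exact_mod_cast hJs J (Finset.mem_union_right _ (Finset.mem_singleton_self _))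
  have hcoeffc : D'.subtype (MvPolynomial.coeff (m₀ J) q') = c := by
    rw [hc, ← hq', MvPolynomial.coeff_map]
  have hunit : MvPolynomial.coeff (m₀ J) q' * (⟨c⁻¹, hcinv⟩ : ↥D') = 1 := by
    apply Subtype.ext
    show D'.subtype (MvPolynomial.coeff (m₀ J) q' * ⟨c⁻¹, hcinv⟩) = D'.subtype 1
    rw [map_mul, hcoeffc, map_one]
    show c * c⁻¹ = 1
    exact mul_inv_cancel₀ (hm₀ne J)
  have hfne : f (MvPolynomial.coeff (m₀ J) q') ≠ 0 := by
    have : f (MvPolynomial.coeff (m₀ J) q') * f ⟨c⁻¹, hcinv⟩ = 1 := by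
      rw [← map_mul, hunit, map_one]
    exact left_ne_zero_of_mul_eq_one this
  have : MvPolynomial.coeff (m₀ J) (MvPolynomial.map g q') = 0 := by
    rw [hzero]; simp
  rw [MvPolynomial.coeff_map] at this
  have h2 : E'.e (f (MvPolynomial.coeff (m₀ J) q')) = E'.e 0 := by
    rw [map_zero]
    exact this
  exact hfne (E'.e.injective h2)
end

section
/- Let (K,σ) be a perfect inversive difference field and P ∈ K[x1,…,xn]_σ a non-constant difference polynomial. Then the full twisting reduction Q of P is well-defined (exists and is unique), and Q has a non-zero partial derivative ∂Q/∂x_{i0} for some 1 ≤ i0 ≤ n. -/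
/- Statement 11: well-definedness of the full twisting reduction and non-vanishing of some partial derivative. -/


open MvPolynomial

universe u

/-- The exponent transformation of the (full) twisting reduction: given the shift `m`
and the twist `ℓ`, the variable `xᵢ^{σ^{m}}` becomes `xᵢ` with exponent divided by
`p^ℓ`, and for `t > m` the variable `xᵢ^{σ^{t}}` becomes `xᵢ^{τ^{t-m}}` with exponent
multiplied by `p^{ℓ (t-m-1)}`. -/
noncomputable def twistExp (p ℓ m : ℕ) {n : ℕ} (e : (Fin n × ℕ) →₀ ℕ) :
    (Fin n × ℕ) →₀ ℕ :=
  e.sum fun v k =>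
    Finsupp.single (v.1, v.2 - m)
      (if v.2 = m then k / p ^ ℓ else k * p ^ (ℓ * (v.2 - m - 1)))

/-- The twisting reduction of a difference polynomial `P ∈ K[x̄]_σ`, with shift `m` and
twist `ℓ`, regarded as a difference polynomial for the `ℓ`-th twist `τ` of `σ`
(`τ ∘ Frob_p^ℓ = σ`): exponents are transformed by `twistExp` and each coefficient `a`
is replaced by `(σ^{-m} a)^{1/p^ℓ}`. -/
noncomputable def twistRed {K : Type u} [Field K] (p : ℕ) [ExpChar K p] [PerfectRing K p]
    (σ : K →+* K) (hσ : Function.Surjective σ) (ℓ m : ℕ) {n : ℕ}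
    (P : DiffPoly n K) : DiffPoly n K :=
  P.support.sum fun e =>
    MvPolynomial.monomial (twistExp p ℓ m e)
      ((⇑(frobeniusEquiv K p).symm)^[ℓ]
        ((⇑(RingEquiv.ofBijective σ ⟨σ.injective, hσ⟩).symm)^[m]
          (MvPolynomial.coeff e P)))

/-- The maximality conditions defining the *full* twisting reduction: `m` is maximal
with `P ∈ K[x₁^{σ^m},…,xₙ^{σ^m}]_σ`, and `ℓ` is maximal such that `p^ℓ` divides every
element of the set `S` of nonzero exponents of the variables of σ-order exactly `m`
(with `ℓ = 0` when the exponential characteristic is `1`, i.e. in characteristic `0`). -/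
def IsFullTwistData {K : Type u} [Field K] (p : ℕ) {n : ℕ} (P : DiffPoly n K)
    (m ℓ : ℕ) : Prop :=
  (∀ e ∈ P.support, ∀ v : Fin n × ℕ, e v ≠ 0 → m ≤ v.2) ∧
  (∃ e ∈ P.support, ∃ i : Fin n, e (i, m) ≠ 0) ∧
  (if p = 1 then ℓ = 0
   else (∀ e ∈ P.support, ∀ i : Fin n, e (i, m) ≠ 0 → p ^ ℓ ∣ e (i, m)) ∧
     ∃ e ∈ P.support, ∃ i : Fin n, e (i, m) ≠ 0 ∧ ¬ p ^ (ℓ + 1) ∣ e (i, m))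


section Aux

lemma iterate_equiv_ne_zero {K : Type u} [Field K] (f : K ≃+* K) (k : ℕ) {x : K}
    (hx : x ≠ 0) : (⇑f)^[k] x ≠ 0 := by
  induction k with
  | zero => simpa using hx
  | succ k ih =>
    rw [Function.iterate_succ_apply']
    intro h
    exact ih (f.injective (by rw [h, map_zero]))

lemma charP_of_expChar_ne_one {K : Type u} [Field K] {p : ℕ} [hE : ExpChar K p]
    (hp : p ≠ 1) : CharP K p := by
  cases hE with
  | zero => exact absurd rfl hp
  | prime hq => assumption

lemma charZero_of_expChar_eq_one {K : Type u} [Field K] {p : ℕ} [hE : ExpChar K p]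
    (hp : p = 1) : CharZero K := by
  subst hp
  cases hE with
  | zero => assumption
  | prime hq => exact absurd hq Nat.not_prime_one

lemma twistExp_apply {n : ℕ} (p ℓ m : ℕ) (e : (Fin n × ℕ) →₀ ℕ)
    (he : ∀ v, e v ≠ 0 → m ≤ v.2) (i : Fin n) (t : ℕ) :
    twistExp p ℓ m e (i, t) =
      if t = 0 then e (i, m) / p ^ ℓ else e (i, m + t) * p ^ (ℓ * (t - 1)) := by
  classical
  unfold twistExp
  rw [Finsupp.sum_apply, Finsupp.sum, Finset.sum_eq_single ((i, m + t) : Fin n × ℕ)]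
  · rw [Finsupp.single_apply, if_pos (by simp)]
    rcases eq_or_ne t 0 with ht | ht
    · subst ht; simp
    · rw [if_neg (show ¬ (i, m + t).2 = m by simp; omega), if_neg ht]
      have hx : (i, m + t).2 - m - 1 = t - 1 := by simp
      rw [hx]
  · intro v hv hne
    rw [Finsupp.single_apply, if_neg]
    intro hc
    have hm : m ≤ v.2 := he v (Finsupp.mem_support_iff.mp hv)
    apply hne
    have h1 : v.1 = i := congrArg Prod.fst hc
    have h2 : v.2 - m = t := congrArg Prod.snd hc
    exact Prod.ext h1 (by omega)
  · intro hns
    have h0 : e (i, m + t) = 0 := Finsupp.notMem_support_iff.mp hns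
    rw [Finsupp.single_apply, h0]
    simp

lemma twistExp_injOn {n : ℕ} (p ℓ m : ℕ) (hp : 0 < p) {e e' : (Fin n × ℕ) →₀ ℕ}
    (he : ∀ v, e v ≠ 0 → m ≤ v.2) (he' : ∀ v, e' v ≠ 0 → m ≤ v.2)
    (hd : ∀ i, p ^ ℓ ∣ e (i, m)) (hd' : ∀ i, p ^ ℓ ∣ e' (i, m))
    (h : twistExp p ℓ m e = twistExp p ℓ m e') : e = e' := by
  have hppow : 0 < p ^ ℓ := pow_pos hp ℓ
  ext ⟨i, s⟩
  rcases lt_trichotomy s m with hs | hseq | hs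
  · have h1 : e (i, s) = 0 := by
      by_contra hc; exact absurd (he (i, s) hc) (by omega)
    have h2 : e' (i, s) = 0 := by
      by_contra hc; exact absurd (he' (i, s) hc) (by omega)
    rw [h1, h2]
  · rw [hseq]
    have h0 := DFunLike.congr_fun h (i, 0)
    rw [twistExp_apply p ℓ m e he, twistExp_apply p ℓ m e' he', if_pos rfl, if_pos rfl] at h0
    have c1 := Nat.div_mul_cancel (hd i)
    have c2 := Nat.div_mul_cancel (hd' i)
    rw [← c1, ← c2, h0]
  · have ht : s - m ≠ 0 := by omega
    have h0 := DFunLike.congr_fun h (i, s - m)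
    rw [twistExp_apply p ℓ m e he, twistExp_apply p ℓ m e' he', if_neg ht, if_neg ht] at h0
    have hms : m + (s - m) = s := by omega
    rw [hms] at h0
    exact Nat.eq_of_mul_eq_mul_right (pow_pos hp _) h0

lemma twistRed_pderiv_ne_zero {K : Type u} [Field K] (p : ℕ) [ExpChar K p] [PerfectRing K p]
    (σ : K →+* K) (hσ : Function.Surjective σ) {n : ℕ} (P : DiffPoly n K)
    (m ℓ : ℕ) (hcond : IsFullTwistData p P m ℓ) :
    ∃ i₀ : Fin n, MvPolynomial.pderiv (i₀, 0) (twistRed p σ hσ ℓ m P) ≠ 0 := by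
  classical
  obtain ⟨h1, h2, h3⟩ := hcond
  have hp : 0 < p := expChar_pos K p
  -- divisibility of all exponents at level m
  have hd : ∀ e ∈ P.support, ∀ i : Fin n, p ^ ℓ ∣ e (i, m) := by
    intro e heP i
    rcases eq_or_ne (e (i, m)) 0 with h0 | h0
    · rw [h0]; exact dvd_zero _
    · rcases eq_or_ne p 1 with hp1 | hp1
      · rw [hp1, one_pow]; exact one_dvd _
      · rw [if_neg hp1] at h3
        exact h3.1 e heP i h0
  -- the witness
  obtain ⟨e₀, he₀P, i₀, hi₀, hℓ1⟩ :
      ∃ e₀ ∈ P.support, ∃ i₀ : Fin n, e₀ (i₀, m) ≠ 0 ∧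
        (p = 1 ∨ ¬ p ^ (ℓ + 1) ∣ e₀ (i₀, m)) := by
    rcases eq_or_ne p 1 with hp1 | hp1
    · obtain ⟨e₀, he₀P, i₀, hi₀⟩ := h2
      exact ⟨e₀, he₀P, i₀, hi₀, Or.inl hp1⟩
    · rw [if_neg hp1] at h3
      obtain ⟨e₀, he₀P, i₀, hi₀, hnd⟩ := h3.2
      exact ⟨e₀, he₀P, i₀, hi₀, Or.inr hnd⟩
  refine ⟨i₀, ?_⟩
  set T : ((Fin n × ℕ) →₀ ℕ) → ((Fin n × ℕ) →₀ ℕ) := twistExp p ℓ m with hT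
  set c : ((Fin n × ℕ) →₀ ℕ) → K := fun e =>
    (⇑(frobeniusEquiv K p).symm)^[ℓ]
      ((⇑(RingEquiv.ofBijective σ ⟨σ.injective, hσ⟩).symm)^[m]
        (MvPolynomial.coeff e P)) with hc
  have hcne : ∀ e ∈ P.support, c e ≠ 0 := by
    intro e heP
    apply iterate_equiv_ne_zero
    apply iterate_equiv_ne_zero
    exact MvPolynomial.mem_support_iff.mp heP
  -- the destination exponent value d
  set d : ℕ := e₀ (i₀, m) / p ^ ℓ with hdd
  have hTd : T e₀ (i₀, 0) = d := by
    rw [hT, twistExp_apply p ℓ m e₀ (h1 e₀ he₀P), if_pos rfl]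
  have hd0 : d ≠ 0 := by
    have := Nat.div_mul_cancel (hd e₀ he₀P i₀)
    intro hcon
    rw [hdd] at hcon
    rw [hcon] at this
    simp at this
    exact hi₀ this.symm
  have hdK : (d : K) ≠ 0 := by
    rcases hℓ1 with hp1 | hnd
    · -- p = 1 : char zero
      have hcz : CharZero K := charZero_of_expChar_eq_one hp1
      exact Nat.cast_ne_zero.mpr hd0
    · -- p prime case
      have hpprime : p.Prime := by
        rcases expChar_is_prime_or_one K p with h | h
        · exact h
        · rw [h] at hnd
          simp at hnd
      have hcharP : CharP K p := charP_of_expChar_ne_one hpprime.ne_one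
      rw [Ne, CharP.cast_eq_zero_iff K p]
      intro hpd
      apply hnd
      obtain ⟨d', hd'⟩ := hpd
      have hcan := Nat.div_mul_cancel (hd e₀ he₀P i₀)
      rw [hdd] at hd'
      refine ⟨d', ?_⟩
      rw [← hcan, hd']
      ring
  -- now compute the relevant coefficient of the derivative
  have hQ : twistRed p σ hσ ℓ m P =
      P.support.sum fun e => MvPolynomial.monomial (T e) (c e) := rfl
  rw [hQ]
  intro hzero
  have hcoeff := congrArg
    (MvPolynomial.coeff (T e₀ - Finsupp.single ((i₀, 0) : Fin n × ℕ) 1)) hzero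
  rw [map_sum] at hcoeff
  rw [MvPolynomial.coeff_sum] at hcoeff
  simp only [MvPolynomial.pderiv_monomial, MvPolynomial.coeff_monomial] at hcoeff
  rw [Finset.sum_eq_single e₀] at hcoeff
  · rw [if_pos rfl] at hcoeff
    rw [hTd] at hcoeff
    exact (mul_ne_zero (hcne e₀ he₀P) hdK) (by simpa using hcoeff)
  · intro e heP hne
    rcases eq_or_ne (T e ((i₀, 0) : Fin n × ℕ)) 0 with hTe | hTe
    · rw [hTe]
      simp
    · rw [if_neg]
      intro hc
      apply hne
      have hle : Finsupp.single ((i₀, 0) : Fin n × ℕ) 1 ≤ T e :=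
        Finsupp.single_le_iff.mpr (by omega)
      have hle' : Finsupp.single ((i₀, 0) : Fin n × ℕ) 1 ≤ T e₀ :=
        Finsupp.single_le_iff.mpr (by rw [hTd]; omega)
      have hTT : T e = T e₀ := by
        have := congrArg (· + Finsupp.single ((i₀, 0) : Fin n × ℕ) 1) hc
        simpa [tsub_add_cancel_of_le hle, tsub_add_cancel_of_le hle'] using this
      exact twistExp_injOn p ℓ m hp (h1 e heP) (h1 e₀ he₀P)
        (hd e heP) (hd e₀ he₀P) hTT
  · intro hcon
    exact absurd he₀P hcon

end Aux

/-- Let `(K, σ)` be a perfect inversive difference field and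
`P ∈ K[x₁,…,xₙ]_σ` non-constant.  Then the full twisting reduction `Q` of `P` is
well-defined (the shift `m` and twist `ℓ` exist and are unique, and `Q = twistRed`),
and `Q` has a nonzero partial derivative `∂Q/∂x_{i₀}` for some `i₀`. -/
theorem full_twisting_reduction_exists_and_has_nonzero_derivative
    {K : Type u} [Field K] (p : ℕ) [ExpChar K p] [PerfectRing K p]
    (σ : K →+* K) (hσ : Function.Surjective σ)
    {n : ℕ} (P : DiffPoly n K) (hP : ¬ ∃ c : K, P = MvPolynomial.C c) :
    (∃! mℓ : ℕ × ℕ, IsFullTwistData p P mℓ.1 mℓ.2) ∧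
    ∀ m ℓ : ℕ, IsFullTwistData p P m ℓ →
      ∃ i₀ : Fin n, MvPolynomial.pderiv (i₀, 0) (twistRed p σ hσ ℓ m P) ≠ 0 := by
  classical
  -- P has a nonzero exponent
  have hPne : ∃ e ∈ P.support, ∃ v : Fin n × ℕ, e v ≠ 0 := by
    by_contra h
    push_neg at h
    apply hP
    refine ⟨MvPolynomial.coeff 0 P, ?_⟩
    apply MvPolynomial.ext
    intro e
    rcases eq_or_ne e 0 with rfl | hne
    · simp
    · rw [MvPolynomial.coeff_C, if_neg (Ne.symm hne)]
      by_contra hc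
      obtain ⟨v, hv⟩ := Finsupp.ne_iff.mp hne
      have h0 : e v = 0 := h e (MvPolynomial.mem_support_iff.mpr hc) v
      simp [h0] at hv
  -- define m
  set Tset : Set ℕ := {t | ∃ e ∈ P.support, ∃ i : Fin n, e (i, t) ≠ 0} with hTset
  have hTne : Tset.Nonempty := by
    obtain ⟨e, heP, ⟨i, t⟩, hv⟩ := hPne
    exact ⟨t, e, heP, i, hv⟩
  set m := sInf Tset with hm
  have hmmem : m ∈ Tset := Nat.sInf_mem hTne
  have hcond1 : ∀ e ∈ P.support, ∀ v : Fin n × ℕ, e v ≠ 0 → m ≤ v.2 := by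
    intro e heP ⟨i, t⟩ hv
    exact Nat.sInf_le ⟨e, heP, i, hv⟩
  obtain ⟨e₁, he₁P, i₁, hi₁⟩ := hmmem
  -- define ℓ
  have hexists : ∃ ℓ : ℕ, IsFullTwistData p P m ℓ := by
    rcases eq_or_ne p 1 with hp1 | hp1
    · exact ⟨0, hcond1, ⟨e₁, he₁P, i₁, hi₁⟩, by rw [if_pos hp1]⟩
    · have hpprime : p.Prime := by
        rcases expChar_is_prime_or_one K p with h | h
        · exact h
        · exact absurd h hp1
      have hp2 : 2 ≤ p := hpprime.two_le
      set Lset : Set ℕ :=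
        {k | ∃ e ∈ P.support, ∃ i : Fin n, e (i, m) ≠ 0 ∧ ¬ p ^ (k + 1) ∣ e (i, m)} with hLset
      have hLne : Lset.Nonempty := by
        refine ⟨e₁ (i₁, m), e₁, he₁P, i₁, hi₁, ?_⟩
        intro hdvd
        have hlt : e₁ (i₁, m) < p ^ (e₁ (i₁, m) + 1) := by
          calc e₁ (i₁, m) < 2 ^ (e₁ (i₁, m) + 1) := by
                have := Nat.lt_two_pow_self (n := e₁ (i₁, m))
                have h2 : (2:ℕ) ^ (e₁ (i₁, m)) ≤ 2 ^ (e₁ (i₁, m) + 1) :=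
                  Nat.pow_le_pow_right (by norm_num) (by omega)
                omega
            _ ≤ p ^ (e₁ (i₁, m) + 1) := Nat.pow_le_pow_left hp2 _
        exact absurd (Nat.le_of_dvd (Nat.pos_of_ne_zero hi₁) hdvd) (by omega)
      have hℓmem : sInf Lset ∈ Lset := Nat.sInf_mem hLne
      obtain ⟨e₂, he₂P, i₂, hi₂, hnd₂⟩ := hℓmem
      refine ⟨sInf Lset, hcond1, ⟨e₁, he₁P, i₁, hi₁⟩, ?_⟩
      rw [if_neg hp1]
      refine ⟨?_, e₂, he₂P, i₂, hi₂, hnd₂⟩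
      intro e heP i hne
      by_contra hnd
      have hℓpos : sInf Lset ≠ 0 := by
        intro h0
        rw [h0, pow_zero] at hnd
        exact hnd (one_dvd _)
      have hnotmem : sInf Lset - 1 ∉ Lset := Nat.notMem_of_lt_sInf (by omega)
      apply hnotmem
      refine ⟨e, heP, i, hne, ?_⟩
      have hx : sInf Lset - 1 + 1 = sInf Lset := by omega
      rw [hx]
      exact hnd
  obtain ⟨ℓ, hftd⟩ := hexists
  have huniq : ∀ m' ℓ' : ℕ, IsFullTwistData p P m' ℓ' → (m', ℓ') = (m, ℓ) := by
    intro m' ℓ' ⟨h1', h2', h3'⟩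
    obtain ⟨h1, h2, h3⟩ := hftd
    -- m' = m
    have hm'm : m' = m := by
      obtain ⟨ea, heaP, ia, hia⟩ := h2
      obtain ⟨eb, hebP, ib, hib⟩ := h2'
      have := h1' ea heaP (ia, m) hia
      have := h1 eb hebP (ib, m') hib
      omega
    subst hm'm
    -- ℓ' = ℓ
    have hℓℓ : ℓ' = ℓ := by
      rcases eq_or_ne p 1 with hp1 | hp1
      · rw [if_pos hp1] at h3 h3'
        rw [h3, h3']
      · rw [if_neg hp1] at h3 h3'
        obtain ⟨hall, eb, hebP, ib, hib, hnb⟩ := h3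
        obtain ⟨hall', ec, hecP, ic, hic, hnc⟩ := h3'
        have hup1 : ℓ' ≤ ℓ := by
          by_contra hlt
          exact hnb (dvd_trans (pow_dvd_pow p (by omega)) (hall' eb hebP ib hib))
        have hup2 : ℓ ≤ ℓ' := by
          by_contra hlt
          exact hnc (dvd_trans (pow_dvd_pow p (by omega)) (hall ec hecP ic hic))
        omega
    rw [hℓℓ]
  constructor
  · exact ⟨(m, ℓ), hftd, fun mℓ' h => huniq mℓ'.1 mℓ'.2 h⟩
  · intro m' ℓ' h
    exact twistRed_pderiv_ne_zero p σ hσ P m' ℓ' h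
end

section
/- Suppose (K,σ) is a difference field of characteristic p, and L = K(ā)_σ is a finitely generated difference field extension of K that is transformally algebraic over K. Then there exist t ∈ ℕ and n ∈ ℕ such that, setting τ := σ∘(Frob_p)^t (so that L is naturally a τ-difference field) and F := K(ā, σ(ā),…,σ^n(ā))_τ ≤ L, one has ld(F/K)_τ = rld(F/K)_τ. -/
/- Statement 14: after twisting by a power of Frobenius, limit degree equals reduced limit degree. -/


open MvPolynomial

universe u

set_option synthInstance.maxHeartbeats 1000000 in
set_option maxHeartbeats 1000000 in
open scoped Classical in
/-- The `k`-th step degree of the difference field extension `K(B)_f / K` inside `L`: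
the field extension degree `[K(B, f(B), …, f^{k+1}(B)) : K(B, f(B), …, f^{k}(B))]`,
valued in `ℕ∞` (with value `⊤` for a non-algebraic step, matching the convention that
the degree of a non-algebraic extension is `∞`). -/
noncomputable def stepDeg {L : Type u} [Field L] (K : Subfield L) (B : Set L)
    (f : L → L) (k : ℕ) : ℕ∞ :=
  letI : Algebra ↥K L := K.subtype.toAlgebra
  let E1 := IntermediateField.adjoin ↥K (⋃ j ∈ Finset.range (k + 1), f^[j] '' B)
  let E2 := IntermediateField.adjoin ↥K (⋃ j ∈ Finset.range (k + 2), f^[j] '' B)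
  have hle : E1 ≤ E2 := by
    apply IntermediateField.adjoin.mono
    refine Set.iUnion₂_subset fun j hj => ?_
    refine Set.subset_iUnion₂_of_subset j ?_ subset_rfl
    simp only [Finset.mem_range] at hj ⊢
    omega
  letI : Algebra ↥E1 ↥E2 := (IntermediateField.inclusion hle).toRingHom.toAlgebra
  if Module.Finite ↥E1 ↥E2 then (Module.finrank ↥E1 ↥E2 : ℕ∞) else ⊤

set_option synthInstance.maxHeartbeats 1000000 in
set_option maxHeartbeats 1000000 in
open scoped Classical in
/-- The `k`-th step separable degree, valued in `ℕ∞` (with value `⊤` for a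
non-algebraic step). -/
noncomputable def stepSepDeg {L : Type u} [Field L] (K : Subfield L) (B : Set L)
    (f : L → L) (k : ℕ) : ℕ∞ :=
  letI : Algebra ↥K L := K.subtype.toAlgebra
  let E1 := IntermediateField.adjoin ↥K (⋃ j ∈ Finset.range (k + 1), f^[j] '' B)
  let E2 := IntermediateField.adjoin ↥K (⋃ j ∈ Finset.range (k + 2), f^[j] '' B)
  have hle : E1 ≤ E2 := by
    apply IntermediateField.adjoin.mono
    refine Set.iUnion₂_subset fun j hj => ?_
    refine Set.subset_iUnion₂_of_subset j ?_ subset_rfl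
    simp only [Finset.mem_range] at hj ⊢
    omega
  letI : Algebra ↥E1 ↥E2 := (IntermediateField.inclusion hle).toRingHom.toAlgebra
  if Module.Finite ↥E1 ↥E2 then (Field.finSepDegree ↥E1 ↥E2 : ℕ∞) else ⊤

/-- The limit degree `ld(K(B)_f / K)`. -/
noncomputable def limitDeg {L : Type u} [Field L] (K : Subfield L) (B : Set L)
    (f : L → L) : ℕ∞ :=
  ⨅ k : ℕ, stepDeg K B f k

/-- The reduced limit degree `rld(K(B)_f / K)`. -/
noncomputable def reducedLimitDeg {L : Type u} [Field L] (K : Subfield L) (B : Set L)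
    (f : L → L) : ℕ∞ :=
  ⨅ k : ℕ, stepSepDeg K B f k

open Polynomial in
theorem isSep_of_poly {F L : Type u} [Field F] [Field L] [Algebra F L] (x : L)
    (g : L[X]) (hsep : g.Separable) (hc : ∀ n, g.coeff n ∈ Set.range (algebraMap F L))
    (h0 : g.eval x = 0) : IsSeparable F x := by
  obtain ⟨q, hmap⟩ := (Polynomial.lifts_iff_coeff_lifts g).2 hc
  have hq : q.map (algebraMap F L) = g := hmap
  have hqsep : q.Separable := (Polynomial.separable_map (algebraMap F L)).1 (hq ▸ hsep)
  have hq0 : Polynomial.aeval x q = 0 := by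
    rw [Polynomial.aeval_def, ← Polynomial.eval_map, hq, h0]
  exact hqsep.of_dvd (minpoly.dvd F x hq0)

open Polynomial in
theorem isAlg_of_poly {F L : Type u} [Field F] [Field L] [Algebra F L] (x : L)
    (g : L[X]) (hg : g ≠ 0) (hc : ∀ n, g.coeff n ∈ Set.range (algebraMap F L))
    (h0 : g.eval x = 0) : IsAlgebraic F x := by
  obtain ⟨q, hmap⟩ := (Polynomial.lifts_iff_coeff_lifts g).2 hc
  have hq : q.map (algebraMap F L) = g := hmap
  refine ⟨q, fun hq0 => hg ?_, ?_⟩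
  · rw [← hq, hq0, Polynomial.map_zero]
  · rw [Polynomial.aeval_def, ← Polynomial.eval_map, hq, h0]

theorem isSep_pow {F L : Type u} [Field F] [Field L] [Algebra F L] (y : L)
    (h : IsSeparable F y) (n : ℕ) : IsSeparable F (y ^ n) := by
  have hadj : Algebra.IsSeparable F ↥(IntermediateField.adjoin F {y}) :=
    (IntermediateField.isSeparable_adjoin_iff_isSeparable F L).2 (by simpa using h)
  have hmem : y ^ n ∈ IntermediateField.adjoin F {y} :=
    pow_mem (IntermediateField.subset_adjoin F {y} rfl) n
  have h2 := Algebra.IsSeparable.isSeparable F (⟨y ^ n, hmem⟩ : ↥(IntermediateField.adjoin F {y}))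
  have heq := minpoly.algHom_eq (IntermediateField.adjoin F {y}).val
    (IntermediateField.adjoin F {y}).val.injective
    (⟨y ^ n, hmem⟩ : ↥(IntermediateField.adjoin F {y}))
  rw [IsSeparable, show (y ^ n) = (IntermediateField.adjoin F {y}).val
    (⟨y ^ n, hmem⟩ : ↥(IntermediateField.adjoin F {y})) from rfl, heq]
  exact h2

open Polynomial in
theorem isSep_frobPow {F L : Type u} [Field F] [Field L] [Algebra F L] (p : ℕ) [ExpChar L p]
    (x : L) (hx : IsAlgebraic F x) : ∃ m : ℕ, ∀ t : ℕ, m ≤ t → IsSeparable F (x ^ p ^ t) := by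
  haveI : ExpChar F p := (algebraMap F L).expChar (algebraMap F L).injective p
  have hint : IsIntegral F x := hx.isIntegral
  obtain ⟨g, hgsep, m, hexp⟩ := (minpoly.irreducible hint).hasSeparableContraction p
  refine ⟨m, fun t ht => ?_⟩
  have h1 : IsSeparable F (x ^ p ^ m) := by
    have h0 : Polynomial.aeval (x ^ p ^ m) g = 0 := by
      rw [← Polynomial.expand_aeval, hexp, minpoly.aeval]
    exact hgsep.of_dvd (minpoly.dvd F _ h0)
  have hxe : x ^ p ^ t = (x ^ p ^ m) ^ p ^ (t - m) := by
    rw [← pow_mul, ← pow_add, Nat.add_sub_cancel' ht]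
  rw [hxe]
  exact isSep_pow _ h1 _

theorem closure_map_mem {L : Type u} [Field L] (S : Set L) (F : Subfield L) (ρ : L →+* L)
    (h : ∀ x ∈ S, ρ x ∈ F) : ∀ y ∈ Subfield.closure S, ρ y ∈ F := by
  intro y hy
  exact (Subfield.closure_le.2 (fun x hx => h x hx) : Subfield.closure S ≤ F.comap ρ) hy

theorem adjoin_map_mem {F L : Type u} [Field F] [Field L] [Algebra F L] (S : Set L)
    (E : IntermediateField F L) (ρ : L →+* L) (hS : ∀ b ∈ S, ρ b ∈ E)
    (hF : ∀ c : F, ρ (algebraMap F L c) ∈ E) :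
    ∀ y ∈ IntermediateField.adjoin F S, ρ y ∈ E := by
  intro y hy
  induction hy using IntermediateField.adjoin_induction with
  | mem x hx => exact hS x hx
  | algebraMap c => exact hF c
  | add x y _ _ hx hy => rw [map_add]; exact add_mem hx hy
  | inv x _ hx => rw [map_inv₀]; exact inv_mem hx
  | mul x y _ _ hx hy => rw [map_mul]; exact mul_mem hx hy
open Polynomial in
set_option synthInstance.maxHeartbeats 1000000 in
set_option maxHeartbeats 2000000 in
theorem trfAlg_exists_poly {L : Type u} [Field L] (σ : L →+* L) (K : Subfield L) (a : L)
    (h : TrfAlgebraic σ (K : Set L) a) :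
    ∃ m : ℕ, ∃ g : L[X], g ≠ 0 ∧
      (∀ n, g.coeff n ∈ Subfield.closure ((K : Set L) ∪ (fun j => (⇑σ)^[j] a) '' {j | j < m})) ∧
      g.eval ((⇑σ)^[m] a) = 0 := by
  by_contra hcon
  push_neg at hcon
  apply h
  intro P hP hP0
  letI : Algebra ↥K L := K.subtype.toAlgebra
  have halgmap : ∀ c : ↥K, algebraMap ↥K L c = c.1 := fun c => rfl
  -- transcendence of each iterate over the adjoin of previous ones
  have htrans : ∀ M : ℕ, Transcendental
      (Algebra.adjoin ↥K (Set.range fun k : Fin M => (⇑σ)^[(k : ℕ)] a)) ((⇑σ)^[M] a) := by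
    intro M halgx
    set S := Algebra.adjoin ↥K (Set.range fun k : Fin M => (⇑σ)^[(k : ℕ)] a) with hS
    obtain ⟨q, hq0, hqe⟩ := halgx
    have hSsub : ∀ y ∈ S, y ∈ Subfield.closure ((K : Set L) ∪ (fun j => (⇑σ)^[j] a) '' {j | j < M}) := by
      intro y hy
      induction hy using Algebra.adjoin_induction with
      | mem x hx =>
        obtain ⟨k, rfl⟩ := hx
        exact Subfield.subset_closure (Or.inr ⟨k.1, k.isLt, rfl⟩)
      | algebraMap c => exact Subfield.subset_closure (Or.inl c.2)
      | add x y _ _ hx hy => exact add_mem hx hy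
      | mul x y _ _ hx hy => exact mul_mem hx hy
    set g : L[X] := q.map (algebraMap ↥S L) with hg
    have hginj : Function.Injective (algebraMap ↥S L) := Subtype.val_injective
    refine hcon M g (by
      simpa [hg, Polynomial.map_ne_zero_iff hginj] using hq0) (fun n => ?_) ?_
    · rw [hg, Polynomial.coeff_map]
      exact hSsub _ (q.coeff n).2
    · rw [hg, Polynomial.eval_map, ← Polynomial.aeval_def]
      exact hqe
  -- algebraic independence of the prefixes
  have hKinj : Function.Injective (algebraMap ↥K L) := Subtype.val_injective
  have hAI : ∀ M : ℕ, AlgebraicIndependent ↥K (fun k : Fin M => (⇑σ)^[(k : ℕ)] a) := by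
    intro M
    induction M with
    | zero => exact algebraicIndependent_empty_type_iff.2 hKinj
    | succ M ih =>
      have hopt := (ih.option_iff_transcendental ((⇑σ)^[M] a)).2 (htrans M)
      have := hopt.comp finSuccEquivLast finSuccEquivLast.injective
      convert this using 1
      funext k
      induction k using Fin.lastCases with
      | last => simp [finSuccEquivLast_last]
      | cast j => simp [finSuccEquivLast_castSucc]
  -- algebraic independence of the full family
  have hAIN : AlgebraicIndependent ↥K (fun k : ℕ => (⇑σ)^[k] a) := by
    rw [algebraicIndependent_iff]
    intro q hq
    obtain ⟨n, f, hfinj, q', rfl⟩ := MvPolynomial.exists_fin_rename q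
    rw [MvPolynomial.aeval_rename] at hq
    set M := (Finset.univ.sup f) + 1 with hM
    have hfM : ∀ i, f i < M := fun i => Nat.lt_succ_of_le (Finset.le_sup (Finset.mem_univ i))
    set g : Fin n → Fin M := fun i => ⟨f i, hfM i⟩ with hgdef
    have hginj : Function.Injective g := fun i j hij => hfinj (congrArg Fin.val hij)
    have hcomp : ((fun k : ℕ => (⇑σ)^[k] a) ∘ f) = ((fun k : Fin M => (⇑σ)^[(k : ℕ)] a) ∘ g) := rfl
    rw [hcomp] at hq
    have := algebraicIndependent_iff.1 ((hAI M).comp g hginj) q' hq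
    rw [this, map_zero]
  have hv : AlgebraicIndependent ↥K (fun q : Fin 1 × ℕ => (⇑σ)^[q.2] a) := by
    have hsnd : Function.Injective (Prod.snd : Fin 1 × ℕ → ℕ) := fun x y hxy =>
      Prod.ext (Subsingleton.elim _ _) hxy
    exact hAIN.comp Prod.snd hsnd
  -- build the polynomial over K and conclude
  classical
  set Q : MvPolynomial (Fin 1 × ℕ) ↥K :=
    ∑ m ∈ P.support, MvPolynomial.monomial m (⟨MvPolynomial.coeff m P, hP m⟩ : ↥K) with hQ
  have hmapQ : MvPolynomial.map (algebraMap ↥K L) Q = P := by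
    rw [hQ, map_sum]
    conv_rhs => rw [P.as_sum]
    refine Finset.sum_congr rfl fun m _ => ?_
    rw [MvPolynomial.map_monomial]
    rfl
  have hQ0 : MvPolynomial.aeval (fun q : Fin 1 × ℕ => (⇑σ)^[q.2] a) Q = 0 := by
    rw [MvPolynomial.aeval_def, MvPolynomial.eval₂_eq_eval_map, hmapQ]
    exact hP0
  have : Q = 0 := hv (by rw [hQ0, map_zero])
  rw [← hmapQ, this, map_zero]

set_option synthInstance.maxHeartbeats 1000000 in
set_option maxHeartbeats 1000000 in
open scoped Classical in
open Polynomial in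
theorem step_eq_of_sep {L : Type u} [Field L] (K : Subfield L) (B : Set L) (f : L → L) (k : ℕ)
    (h : ∀ x ∈ (⋃ j ∈ Finset.range (k + 2), f^[j] '' B), ∃ g : Polynomial L, g.Separable ∧
      (∀ n, g.coeff n ∈ (letI : Algebra ↥K L := K.subtype.toAlgebra;
        (IntermediateField.adjoin ↥K (⋃ j ∈ Finset.range (k + 1), f^[j] '' B) : Set L))) ∧
      g.eval x = 0) :
    stepDeg K B f k = stepSepDeg K B f k := by
  letI : Algebra ↥K L := K.subtype.toAlgebra
  have hle : IntermediateField.adjoin ↥K (⋃ j ∈ Finset.range (k + 1), f^[j] '' B) ≤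
      IntermediateField.adjoin ↥K (⋃ j ∈ Finset.range (k + 2), f^[j] '' B) := by
    apply IntermediateField.adjoin.mono
    refine Set.iUnion₂_subset fun j hj => ?_
    refine Set.subset_iUnion₂_of_subset j ?_ subset_rfl
    simp only [Finset.mem_range] at hj ⊢
    omega
  set E1 := IntermediateField.adjoin ↥K (⋃ j ∈ Finset.range (k + 1), f^[j] '' B) with hE1
  set E2 := IntermediateField.adjoin ↥K (⋃ j ∈ Finset.range (k + 2), f^[j] '' B) with hE2
  letI alg12 : Algebra ↥E1 ↥E2 := (IntermediateField.inclusion hle).toRingHom.toAlgebra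
  have hgen : ∀ x ∈ (⋃ j ∈ Finset.range (k + 2), f^[j] '' B), IsSeparable ↥E1 x := by
    intro x hx
    obtain ⟨g, hsep, hcoeff, heval⟩ := h x hx
    exact isSep_of_poly x g hsep (fun n => ⟨⟨g.coeff n, hcoeff n⟩, rfl⟩) heval
  haveI hadj : Algebra.IsSeparable ↥E1
      ↥(IntermediateField.adjoin ↥E1 (⋃ j ∈ Finset.range (k + 2), f^[j] '' B)) :=
    (IntermediateField.isSeparable_adjoin_iff_isSeparable ↥E1 L).2 hgen
  have hsub : ∀ x ∈ E2, x ∈ IntermediateField.adjoin ↥E1 (⋃ j ∈ Finset.range (k + 2), f^[j] '' B) := by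
    intro x hx
    have hle2 : E2 ≤ (IntermediateField.adjoin ↥E1
        (⋃ j ∈ Finset.range (k + 2), f^[j] '' B)).restrictScalars ↥K := by
      rw [hE2]
      exact IntermediateField.adjoin_le_iff.2 (IntermediateField.subset_adjoin _ _)
    exact hle2 hx
  haveI hsepa : Algebra.IsSeparable ↥E1 ↥E2 := by
    refine ⟨fun x => ?_⟩
    have hx2 := hsub x.1 x.2
    have h1 : IsSeparable ↥E1 (⟨x.1, hx2⟩ :
        ↥(IntermediateField.adjoin ↥E1 (⋃ j ∈ Finset.range (k + 2), f^[j] '' B))) :=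
      Algebra.IsSeparable.isSeparable _ _
    have e1 := minpoly.algHom_eq
      (IntermediateField.adjoin ↥E1 (⋃ j ∈ Finset.range (k + 2), f^[j] '' B)).val
      Subtype.val_injective (⟨x.1, hx2⟩ :
        ↥(IntermediateField.adjoin ↥E1 (⋃ j ∈ Finset.range (k + 2), f^[j] '' B)))
    let ι : ↥E2 →ₐ[↥E1] L :=
      { toFun := fun y => y.1
        map_one' := rfl
        map_mul' := fun _ _ => rfl
        map_zero' := rfl
        map_add' := fun _ _ => rfl
        commutes' := fun c => rfl }
    have e2 := minpoly.algHom_eq ι (fun a b hab => Subtype.ext hab) x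
    have e3 : minpoly ↥E1 (ι x) = minpoly ↥E1 (⟨x.1, hx2⟩ :
        ↥(IntermediateField.adjoin ↥E1 (⋃ j ∈ Finset.range (k + 2), f^[j] '' B))) := e1
    rw [IsSeparable, ← e2, e3]
    exact h1
  unfold stepDeg stepSepDeg
  simp only
  split_ifs with hfin
  · congr 1
    exact (Field.finSepDegree_eq_finrank_of_isSeparable ↥E1 ↥E2).symm
  · rfl

set_option synthInstance.maxHeartbeats 1000000 in
set_option maxHeartbeats 4000000 in
open Polynomial in
/-- Let `(K, σ)` be a difference field of characteristic `p` and
`L = K(ā)_σ` a finitely generated, transformally algebraic difference field extension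
of `K`.  Then there are `t, n ∈ ℕ` such that, setting `τ := σ ∘ Frob_p^t` and
`F := K(ā, σ(ā), …, σ^n(ā))_τ ≤ L`, one has `ld(F/K)_τ = rld(F/K)_τ`.
(Here `p` is the exponential characteristic, so `Frob_p = id` in characteristic `0`.) -/
theorem limit_degree_eq_reduced_limit_degree_after_twist
    {L : Type u} [Field L] (σ : L →+* L) (p : ℕ) [ExpChar L p]
    (K : Subfield L) (hσK : ∀ x ∈ K, σ x ∈ K)
    {r : ℕ} (abar : Fin r → L)
    -- L = K(ā)_σ is finitely generated over K:
    (hfg : diffClosure σ ((K : Set L) ∪ Set.range abar) = ⊤)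
    -- and transformally algebraic over K:
    (halg : ∀ x : L, TrfAlgebraic σ (K : Set L) x) :
    ∃ t nn : ℕ,
      limitDeg K (⋃ j ∈ Finset.range (nn + 1), (⇑σ)^[j] '' Set.range abar)
          (⇑(σ.comp (iterateFrobenius L p t))) =
        reducedLimitDeg K (⋃ j ∈ Finset.range (nn + 1), (⇑σ)^[j] '' Set.range abar)
          (⇑(σ.comp (iterateFrobenius L p t))) := by
  classical
  letI : Algebra ↥K L := K.subtype.toAlgebra
  have hKiter : ∀ (d : ℕ) (x : L), x ∈ K → (⇑σ)^[d] x ∈ K := by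
    intro d
    induction d with
    | zero => intro x hx; simpa using hx
    | succ d ih =>
      intro x hx
      rw [Function.iterate_succ_apply']
      exact hσK _ (ih x hx)
  have hstep := fun i : Fin r => trfAlg_exists_poly σ K (abar i) (halg (abar i))
  choose m g0 hg0ne hg0c hg0e using hstep
  set nn := Finset.univ.sup m with hnn
  set B := (⋃ j ∈ Finset.range (nn + 1), (⇑σ)^[j] '' Set.range abar) with hB
  set E0 := IntermediateField.adjoin ↥K B with hE0
  have hKsub : ∀ x ∈ K, x ∈ E0 := fun x hx => E0.algebraMap_mem ⟨x, hx⟩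
  have hBsub : B ⊆ (E0 : Set L) := IntermediateField.subset_adjoin _ _
  -- shifting the algebraic relations
  have hshift : ∀ (i : Fin r) (m' : ℕ), m i ≤ m' → ∃ g : Polynomial L, g ≠ 0 ∧
      (∀ n, g.coeff n ∈ Subfield.closure
        ((K : Set L) ∪ (fun j => (⇑σ)^[j] (abar i)) '' {j | j < m'})) ∧
      g.eval ((⇑σ)^[m'] (abar i)) = 0 := by
    intro i m' hm
    set d := m' - m i with hd
    have hm' : m' = d + m i := by omega
    set ρ : L →+* L := σ ^ d with hρ
    have hρco : ⇑ρ = (⇑σ)^[d] := RingHom.coe_pow σ d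
    refine ⟨(g0 i).map ρ, ?_, ?_, ?_⟩
    · rw [Polynomial.map_ne_zero_iff ρ.injective]; exact hg0ne i
    · intro n
      rw [Polynomial.coeff_map]
      refine closure_map_mem _ _ ρ ?_ _ (hg0c i n)
      rintro x (hx | ⟨j, hj, rfl⟩)
      · refine Subfield.subset_closure (Or.inl ?_)
        rw [hρco]
        exact hKiter d x hx
      · refine Subfield.subset_closure (Or.inr ⟨d + j, by simp only [Set.mem_setOf_eq] at hj ⊢; omega, ?_⟩)
        simp only
        rw [hρco, ← Function.iterate_add_apply]
    · rw [Polynomial.eval_map]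
      have hx : (⇑σ)^[m'] (abar i) = ρ ((⇑σ)^[m i] (abar i)) := by
        rw [hρco, hm', Function.iterate_add_apply]
      rw [hx, Polynomial.eval₂_at_apply, hg0e i, map_zero]
  -- algebraicity of the next iterate over E0
  have halgE0 : ∀ i : Fin r, IsAlgebraic ↥E0 ((⇑σ)^[nn + 1] (abar i)) := by
    intro i
    obtain ⟨g, hgne, hgc, hge⟩ := hshift i (nn + 1)
      (le_trans (Finset.le_sup (Finset.mem_univ i)) (by omega))
    refine isAlg_of_poly _ g hgne (fun n => ?_) hge
    have hmem : g.coeff n ∈ E0 := by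
      refine (Subfield.closure_le (K := _) (t := E0.toSubfield)).2 ?_ (hgc n)
      rintro x (hx | ⟨j, hj, rfl⟩)
      · exact hKsub x hx
      · refine hBsub (Set.mem_iUnion₂.2 ⟨j, Finset.mem_range.2 ?_, ⟨abar i, Set.mem_range_self i, rfl⟩⟩)
        simp only [Set.mem_setOf_eq] at hj; omega
    exact ⟨⟨g.coeff n, hmem⟩, rfl⟩
  -- σ of every generator is algebraic over E0
  have hσB : ∀ b ∈ B, IsAlgebraic ↥E0 (σ b) := by
    intro b hb
    rw [hB, Set.mem_iUnion₂] at hb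
    obtain ⟨j, hj, x, ⟨i, rfl⟩, rfl⟩ := hb
    rw [Finset.mem_range] at hj
    have hσb : σ ((⇑σ)^[j] (abar i)) = (⇑σ)^[j + 1] (abar i) :=
      (Function.iterate_succ_apply' σ j _).symm
    rw [hσb]
    by_cases hjn : j + 1 ≤ nn
    · have hmem : (⇑σ)^[j + 1] (abar i) ∈ E0 :=
        hBsub (Set.mem_iUnion₂.2 ⟨j + 1, Finset.mem_range.2 (by omega),
          ⟨abar i, Set.mem_range_self i, rfl⟩⟩)
      exact isAlgebraic_algebraMap (⟨_, hmem⟩ : ↥E0)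
    · have hje : j = nn := by omega
      subst hje
      exact halgE0 i
  -- choose the Frobenius exponent
  have hBfin : B.Finite := Set.Finite.biUnion (Finset.range (nn + 1)).finite_toSet
    (fun j _ => (Set.finite_range abar).image _)
  have hms : ∀ b : L, b ∈ B → ∃ mb : ℕ, ∀ t, mb ≤ t → IsSeparable ↥E0 ((σ b) ^ p ^ t) :=
    fun b hb => isSep_frobPow p (σ b) (hσB b hb)
  choose mb hmb using hms
  set t := hBfin.toFinset.sup (fun b => if hb : b ∈ B then mb b hb else 0) with hts
  have htb : ∀ (b : L) (hb : b ∈ B), mb b hb ≤ t := by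
    intro b hb
    have h2 : (if hb : b ∈ B then mb b hb else 0) ≤ t :=
      Finset.le_sup (f := fun b => if hb : b ∈ B then mb b hb else 0)
        (hBfin.mem_toFinset.2 hb)
    rwa [dif_pos hb] at h2
  refine ⟨t, nn, ?_⟩
  set τ : L →+* L := σ.comp (iterateFrobenius L p t) with hτ
  have hτb : ∀ b ∈ B, IsSeparable ↥E0 (τ b) := by
    intro b hb
    have hτbe : τ b = (σ b) ^ p ^ t := by
      rw [hτ, RingHom.comp_apply, iterateFrobenius_def, map_pow]
    rw [hτbe]
    exact hmb b hb t (htb b hb)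
  have hτK : ∀ x ∈ K, τ x ∈ K := by
    intro x hx
    rw [hτ, RingHom.comp_apply, iterateFrobenius_def]
    exact hσK _ (pow_mem hx _)
  have hτkK : ∀ (k : ℕ) (x : L), x ∈ K → (⇑τ)^[k] x ∈ K := by
    intro k
    induction k with
    | zero => intro x hx; simpa using hx
    | succ k ih =>
      intro x hx
      rw [Function.iterate_succ_apply']
      exact hτK _ (ih x hx)
  unfold limitDeg reducedLimitDeg
  refine iInf_congr (fun k => ?_)
  refine step_eq_of_sep K B ⇑τ k ?_
  intro x hx
  rw [Set.mem_iUnion₂] at hx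
  obtain ⟨j, hj, b, hb, rfl⟩ := hx
  rw [Finset.mem_range] at hj
  set E1 := IntermediateField.adjoin ↥K (⋃ j ∈ Finset.range (k + 1), (⇑τ)^[j] '' B) with hE1'
  have hKE1 : ∀ x ∈ K, x ∈ E1 := fun x hx => E1.algebraMap_mem ⟨x, hx⟩
  by_cases hjk : j ≤ k
  · -- generator already in E1: use X - C
    have hmem : (⇑τ)^[j] b ∈ E1 := IntermediateField.subset_adjoin _ _
      (Set.mem_iUnion₂.2 ⟨j, Finset.mem_range.2 (by omega), ⟨b, hb, rfl⟩⟩)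
    refine ⟨Polynomial.X - Polynomial.C ((⇑τ)^[j] b), Polynomial.separable_X_sub_C, ?_, by simp⟩
    intro n
    match n with
    | 0 =>
      have hc0 : (Polynomial.X - Polynomial.C ((⇑τ)^[j] b)).coeff 0 = -((⇑τ)^[j] b) := by simp
      rw [hc0]
      exact neg_mem hmem
    | 1 =>
      have hc1 : (Polynomial.X - Polynomial.C ((⇑τ)^[j] b)).coeff 1 = 1 := by simp
      rw [hc1]
      exact one_mem _
    | (n + 2) =>
      have hc2 : (Polynomial.X - Polynomial.C ((⇑τ)^[j] b)).coeff (n + 2) = 0 := by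
        simp [Polynomial.coeff_X]
      rw [hc2]
      exact zero_mem _
  · -- the new generator: map the minimal polynomial of τ b by τ^k
    have hj1 : j = k + 1 := by omega
    subst hj1
    set gb := (minpoly ↥E0 (τ b)).map (algebraMap ↥E0 L) with hgb
    have hgbsep : gb.Separable := Polynomial.Separable.map (hτb b hb)
    have hgbc : ∀ n, gb.coeff n ∈ E0 := fun n => by
      rw [hgb, Polynomial.coeff_map]
      exact ((minpoly ↥E0 (τ b)).coeff n).2
    have hgbe : gb.eval (τ b) = 0 := by
      rw [hgb, Polynomial.eval_map, ← Polynomial.aeval_def]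
      exact minpoly.aeval _ _
    have hρco : ⇑(τ ^ k) = (⇑τ)^[k] := RingHom.coe_pow τ k
    refine ⟨gb.map (τ ^ k), hgbsep.map, ?_, ?_⟩
    · intro n
      rw [Polynomial.coeff_map]
      refine adjoin_map_mem B E1 (τ ^ k) ?_ ?_ _ (hgbc n)
      · intro bb hbb
        have : (τ ^ k) bb = (⇑τ)^[k] bb := by rw [hρco]
        rw [this]
        exact IntermediateField.subset_adjoin _ _
          (Set.mem_iUnion₂.2 ⟨k, Finset.mem_range.2 (by omega), ⟨bb, hbb, rfl⟩⟩)
      · intro c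
        have : (τ ^ k) (algebraMap ↥K L c) = (⇑τ)^[k] c.1 := by rw [hρco]; rfl
        rw [this]
        exact hKE1 _ (hτkK k c.1 c.2)
    · have hxe : (⇑τ)^[k + 1] b = (τ ^ k) (τ b) := by
        rw [hρco]
        exact Function.iterate_succ_apply τ k b
      rw [hxe, Polynomial.eval_map, Polynomial.eval₂_at_apply, hgbe, map_zero]
end
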